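/- arXiv:math/0303307 — 11 statements merged into one kernel-verified Lean document; each statement's English description precedes it below -/
import Mathlib

section
/- Let Ω ⊆ ℂ be open and let A, B, C, D : Ω → ℂ be holomorphic with A(z)D(z) − B(z)C(z) = 1 for all z ∈ Ω. Define w(z) = 1/(|A(z)|² + |B(z)|²) and ζ(z) = (conj(A(z))·C(z) + conj(B(z))·D(z))/(|A(z)|² + |B(z)|²). Then for every z ∈ Ω, (ζ(z)/w(z)²)·conj(D_z ζ(z) + i·D_{iz} ζ(z)) + (1/w(z))·D_z w(z) = 2z·(B′(z)·C(z) − A′(z)·D(z)) + (i/w(z))·D_{iz} w(z), where D_v f(z) denotes the real Fréchet derivative of f at z applied to the vector v ∈ ℂ. -/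
/-!
Write the real derivative of `f : ℂ → ℂ` at `z` as `v ↦ a v + b v̄`, with `a = ∂f`, `b = ∂̄f`.
Then `D_z f + i D_{iz} f = 2 b z̄`, and for real-valued `f` (where `b = ā`)
`D_z f − i D_{iz} f = 2 a z`. Dividing by `2z`, the identity becomes
`(ζ/w²)·conj(∂̄ζ) + ∂w/w = B′C − A′D`. Computing `∂̄ζ` and `∂w` by the Leibniz rules for `∂, ∂̄`
(with `∂ Ā = 0`, `∂̄ A = conj A′`), this follows from `AD − BC = 1` and the Lagrange identity
`|ĀC + B̄D|² + |AD − BC|² = (|A|² + |B|²)(|C|² + |D|²)`.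
-/

open Complex ComplexConjugate

/-- The real-linear map `v ↦ a v + b v̄`; `HasFDerivAt f (wirtingerCLM a b) z` says `∂f = a`
and `∂̄f = b` at `z`. -/
noncomputable def wirtingerCLM (a b : ℂ) : ℂ →L[ℝ] ℂ :=
  a • ContinuousLinearMap.id ℝ ℂ + b • conjCLE.toContinuousLinearMap

@[simp]
theorem wirtingerCLM_apply (a b v : ℂ) : wirtingerCLM a b v = a * v + b * conj v := rfl

theorem wirtingerCLM_inj {a b a' b' : ℂ} :
    wirtingerCLM a b = wirtingerCLM a' b' ↔ a = a' ∧ b = b' := by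
  refine ⟨fun h => ?_, by rintro ⟨rfl, rfl⟩; rfl⟩
  have hsum : a + b = a' + b' := by simpa using congrArg (· 1) h
  have hdiff : a - b = a' - b' := by
    have hI : a * I - b * I = a' * I - b' * I := by simpa [sub_eq_add_neg] using congrArg (· I) h
    exact mul_right_cancel₀ I_ne_zero (by linear_combination hI)
  constructor
  · linear_combination (hsum + hdiff) / 2
  · linear_combination (hsum - hdiff) / 2

theorem wirtingerCLM_apply_add_I_mul (a b v : ℂ) :
    wirtingerCLM a b v + I * wirtingerCLM a b (I * v) = 2 * b * conj v := by
  simp only [wirtingerCLM_apply, map_mul, conj_I]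
  linear_combination (a * v - b * conj v) * I_sq

theorem HasDerivAt.hasFDerivAt_wirtingerCLM {f : ℂ → ℂ} {f' z : ℂ} (h : HasDerivAt f f' z) :
    HasFDerivAt f (wirtingerCLM f' 0) z := by
  refine (h.hasFDerivAt.restrictScalars ℝ).congr_fderiv ?_
  ext v; simp [mul_comm]

namespace HasFDerivAt

variable {f g : ℂ → ℂ} {a b a' b' z : ℂ}

theorem conj_wirtingerCLM (h : HasFDerivAt f (wirtingerCLM a b) z) :
    HasFDerivAt (fun x => conj (f x)) (wirtingerCLM (conj b) (conj a)) z := by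
  refine h.star.congr_fderiv ?_
  ext v; simp [add_comm]

theorem add_wirtingerCLM (hf : HasFDerivAt f (wirtingerCLM a b) z)
    (hg : HasFDerivAt g (wirtingerCLM a' b') z) :
    HasFDerivAt (fun x => f x + g x) (wirtingerCLM (a + a') (b + b')) z := by
  refine (hf.add hg).congr_fderiv ?_
  ext v; simp; ring

theorem mul_wirtingerCLM (hf : HasFDerivAt f (wirtingerCLM a b) z)
    (hg : HasFDerivAt g (wirtingerCLM a' b') z) :
    HasFDerivAt (fun x => f x * g x)
      (wirtingerCLM (a * g z + f z * a') (b * g z + f z * b')) z := by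
  refine (hf.mul hg).congr_fderiv ?_
  ext v; simp; ring

theorem inv_wirtingerCLM (hf : HasFDerivAt f (wirtingerCLM a b) z) (hz : f z ≠ 0) :
    HasFDerivAt (fun x => (f x)⁻¹) (wirtingerCLM (-a / f z ^ 2) (-b / f z ^ 2)) z := by
  refine ((hasFDerivAt_inv' hz).comp z hf).congr_fderiv ?_
  ext v; simp; field_simp; ring

theorem conj_fderiv_add_I_mul (h : HasFDerivAt f (wirtingerCLM a b) z) (v : ℂ) :
    conj (fderiv ℝ f z v + I * fderiv ℝ f z (I * v)) = 2 * conj b * v := by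
  rw [h.fderiv, wirtingerCLM_apply_add_I_mul, map_mul, map_mul, conj_conj, map_ofNat]

theorem fderiv_real_sub_I_mul {w : ℂ → ℝ}
    (h : HasFDerivAt (fun x => (w x : ℂ)) (wirtingerCLM a b) z) (v : ℂ) :
    (fderiv ℝ w z v : ℂ) - I * fderiv ℝ w z (I * v) = 2 * a * v := by
  have hb : b = conj a := (wirtingerCLM_inj.1 (h.unique (by simpa using h.conj_wirtingerCLM))).2
  have hw : HasFDerivAt w (reCLM.comp (wirtingerCLM a b)) z := reCLM.hasFDerivAt.comp z h
  rw [hw.fderiv]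
  apply Complex.ext <;> simp [hb] <;> ring

end HasFDerivAt

theorem mul_conj_add_mul_conj_ne_zero_of_det_eq_one {a b c d : ℂ} (hdet : a * d - b * c = 1) :
    a * conj a + b * conj b ≠ 0 := by
  rw [mul_conj, mul_conj, ← ofReal_add, ofReal_ne_zero]
  intro h
  rw [add_eq_zero_iff_of_nonneg (normSq_nonneg a) (normSq_nonneg b), normSq_eq_zero,
    normSq_eq_zero] at h
  simp [h.1, h.2] at hdet

/-- `(ζ/w²)·conj(∂̄ζ) + ∂w/w = B′C − A′D` at a point, written with `N = 1/w` and `P = ζ N`. -/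
theorem sl2_wirtinger_identity {a b c d a' b' N P : ℂ} (hdet : a * d - b * c = 1)
    (hN : N = a * conj a + b * conj b) (hP : P = conj a * c + conj b * d) :
    P * N * conj ((conj a' * c + conj b' * d) / N - P * (a * conj a' + b * conj b') / N ^ 2)
      - N * ((a' * conj a + b' * conj b) / N ^ 2) = b' * c - a' * d := by
  have hNr : conj N = N := by rw [hN]; simp only [map_add, map_mul, conj_conj]; ring
  have hdet' : conj a * conj d - conj b * conj c = 1 := by simpa using congrArg conj hdet
  have lagrange : P * conj P + 1 = N * (c * conj c + d * conj d) := by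
    rw [hP, hN]; simp only [map_add, map_mul, conj_conj]
    linear_combination (-(a * d - b * c)) * hdet' - hdet
  simp only [map_sub, map_div₀, map_add, map_mul, map_pow, conj_conj, hNr]
  field_simp [hN ▸ mul_conj_add_mul_conj_ne_zero_of_det_eq_one hdet]
  subst hP
  linear_combination (-(a' * conj a + b' * conj b)) * lagrange + N * (b' * c - a' * d) * hdet'

section Holomorphic

variable {A B C D : ℂ → ℂ} {z a' b' c' d' : ℂ}

theorem hasFDerivAt_mul_conj_add_mul_conj (hA : HasDerivAt A a' z) (hB : HasDerivAt B b' z) :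
    HasFDerivAt (fun x => A x * conj (A x) + B x * conj (B x))
      (wirtingerCLM (a' * conj (A z) + b' * conj (B z)) (A z * conj a' + B z * conj b')) z := by
  have hA' := hA.hasFDerivAt_wirtingerCLM
  have hB' := hB.hasFDerivAt_wirtingerCLM
  refine ((hA'.mul_wirtingerCLM hA'.conj_wirtingerCLM).add_wirtingerCLM
    (hB'.mul_wirtingerCLM hB'.conj_wirtingerCLM)).congr_fderiv ?_
  congr 1 <;> simp

theorem hasFDerivAt_inv_mul_conj_add_mul_conj (hA : HasDerivAt A a' z) (hB : HasDerivAt B b' z)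
    (h0 : A z * conj (A z) + B z * conj (B z) ≠ 0) :
    HasFDerivAt (fun x => (A x * conj (A x) + B x * conj (B x))⁻¹)
      (wirtingerCLM
        (-(a' * conj (A z) + b' * conj (B z)) / (A z * conj (A z) + B z * conj (B z)) ^ 2)
        (-(A z * conj a' + B z * conj b') / (A z * conj (A z) + B z * conj (B z)) ^ 2)) z :=
  (hasFDerivAt_mul_conj_add_mul_conj hA hB).inv_wirtingerCLM h0

theorem hasFDerivAt_conj_mul_add_conj_mul_mul_inv (hA : HasDerivAt A a' z) (hB : HasDerivAt B b' z)
    (hC : HasDerivAt C c' z) (hD : HasDerivAt D d' z)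
    (h0 : A z * conj (A z) + B z * conj (B z) ≠ 0) :
    HasFDerivAt
      (fun x => (conj (A x) * C x + conj (B x) * D x) * (A x * conj (A x) + B x * conj (B x))⁻¹)
      (wirtingerCLM
        ((conj (A z) * c' + conj (B z) * d') / (A z * conj (A z) + B z * conj (B z))
          - (conj (A z) * C z + conj (B z) * D z) * (a' * conj (A z) + b' * conj (B z))
            / (A z * conj (A z) + B z * conj (B z)) ^ 2)
        ((conj a' * C z + conj b' * D z) / (A z * conj (A z) + B z * conj (B z))
          - (conj (A z) * C z + conj (B z) * D z) * (A z * conj a' + B z * conj b')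
            / (A z * conj (A z) + B z * conj (B z)) ^ 2)) z := by
  have hA' := hA.hasFDerivAt_wirtingerCLM
  have hB' := hB.hasFDerivAt_wirtingerCLM
  refine (((hA'.conj_wirtingerCLM.mul_wirtingerCLM hC.hasFDerivAt_wirtingerCLM).add_wirtingerCLM
    (hB'.conj_wirtingerCLM.mul_wirtingerCLM hD.hasFDerivAt_wirtingerCLM)).mul_wirtingerCLM
    (hasFDerivAt_inv_mul_conj_add_mul_conj hA hB h0)).congr_fderiv ?_
  congr 1 <;> simp <;> ring

end Holomorphic

/-- Expression of the coefficient `a₁(z)` (lemma coeffintegral, first identity):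
`(ζ/w²)·conj(ρ ∂ζ/∂ρ + i ∂ζ/∂τ) + (ρ/w)·∂w/∂ρ = 2z(B′C − A′D) + i ∂(ln w)/∂τ`,
where `ρ ∂f/∂ρ(z) = D_z f(z)` and `∂f/∂τ(z) = D_{iz} f(z)` are real Fréchet
derivatives applied to the vectors `z` and `iz` respectively. -/
theorem stmt3 (Ω : Set ℂ) (hΩ : IsOpen Ω) (A B C D : ℂ → ℂ)
    (hA : DifferentiableOn ℂ A Ω) (hB : DifferentiableOn ℂ B Ω)
    (hC : DifferentiableOn ℂ C Ω) (hD : DifferentiableOn ℂ D Ω)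
    (hdet : ∀ z ∈ Ω, A z * D z - B z * C z = 1)
    (w : ℂ → ℝ) (ζ : ℂ → ℂ)
    (hw : ∀ z, w z = 1 / (‖A z‖ ^ 2 + ‖B z‖ ^ 2))
    (hζ : ∀ z, ζ z = ((starRingEnd ℂ) (A z) * C z + (starRingEnd ℂ) (B z) * D z) /
      ((‖A z‖ ^ 2 + ‖B z‖ ^ 2 : ℝ) : ℂ)) :
    ∀ z ∈ Ω,
      (ζ z / (w z : ℂ) ^ 2) *
          (starRingEnd ℂ) (fderiv ℝ ζ z z + Complex.I * fderiv ℝ ζ z (Complex.I * z))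
        + ((1 / w z : ℝ) : ℂ) * ((fderiv ℝ w z z : ℝ) : ℂ) =
      2 * z * (deriv B z * C z - deriv A z * D z)
        + (Complex.I / (w z : ℂ)) * ((fderiv ℝ w z (Complex.I * z) : ℝ) : ℂ) := by
  intro z hz
  have hder {F : ℂ → ℂ} (hF : DifferentiableOn ℂ F Ω) : HasDerivAt F (deriv F z) z :=
    (hF.differentiableAt (hΩ.mem_nhds hz)).hasDerivAt
  set N : ℂ → ℂ := fun x => A x * conj (A x) + B x * conj (B x) with hN_def
  have hN x : N x = ((‖A x‖ ^ 2 + ‖B x‖ ^ 2 : ℝ) : ℂ) := by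
    simp only [hN_def, mul_conj, normSq_eq_norm_sq]; push_cast; ring
  have hNz : N z ≠ 0 := mul_conj_add_mul_conj_ne_zero_of_det_eq_one (hdet z hz)
  have hζN : ζ = fun x => (conj (A x) * C x + conj (B x) * D x) * (N x)⁻¹ := by
    funext x; rw [hζ, hN, div_eq_mul_inv]
  have hwN : (fun x => (w x : ℂ)) = fun x => (N x)⁻¹ := by
    funext x; rw [hw, hN]; push_cast; ring
  have hζd := hasFDerivAt_conj_mul_add_conj_mul_mul_inv (hder hA) (hder hB) (hder hC) (hder hD) hNz
  have hwd := hasFDerivAt_inv_mul_conj_add_mul_conj (hder hA) (hder hB) hNz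
  rw [← hζN] at hζd
  rw [← hwN] at hwd
  have hζw : ζ z / (w z : ℂ) ^ 2 = (conj (A z) * C z + conj (B z) * D z) * N z := by
    rw [hζN, congrFun hwN z]; field_simp
  have hIw : I / (w z : ℂ) = I * N z := by rw [congrFun hwN z, div_inv_eq_mul]
  have hw_inv : ((1 / w z : ℝ) : ℂ) = N z := by
    rw [ofReal_div, ofReal_one, congrFun hwN z, one_div, inv_inv]
  rw [hζd.conj_fderiv_add_I_mul, hζw, hIw, hw_inv]
  linear_combination
    (2 * z) * sl2_wirtinger_identity (a' := deriv A z) (b' := deriv B z) (hdet z hz) rfl rfl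
    + N z * hwd.fderiv_real_sub_I_mul z
end

section
/- Let Φ : (ℂ × ℝ) \ {0} → ℂ × ℝ be the inversion Φ(ξ, s) = (ξ/(|ξ|² + s²), s/(|ξ|² + s²)). Let ζ₀ ∈ ℂ with ζ₀ ≠ 0 and set ζ₀′ = ζ₀/|ζ₀|². Then for every (ζ, w) ∈ ℂ × ℝ with w > 0, writing (ζ′, w′) = Φ(ζ, w), the real Fréchet derivative of Φ at (ζ′, w′) applied to the vector (ζ′ − ζ₀′, w′) equals (−w²/conj(ζ₀) + ζ²/ζ₀ − ζ, 2w·Re(ζ/ζ₀) − w). -/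
open Complex EuclideanGeometry WithLp
open scoped RealInnerProductSpace

/-!
Since `ℂ × ℝ` carries the sup norm, view `Φ` as Mathlib's inversion `inversion 0 1` in the
Euclidean space `WithLp 2 (ℂ × ℝ)`. The differential of the inversion at `y ≠ 0` is `‖y‖⁻²` times
the reflection in `y⊥`; evaluated at `y = Φ x` on the vector `Φ x - a` it becomes
`2⟪x, a⟫ x - x - ‖x‖² a`. For `x = (ζ, w)` and `a = (ζ₀′, 0)` we have `ζ₀′ = 1 / ζ̄₀`, hence
`⟪x, a⟫ = Re (ζ / ζ₀)`, and the formula follows from `2 Re (ζ / ζ₀) ζ = ζ² / ζ₀ + |ζ|² / ζ̄₀`.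
-/

namespace EuclideanGeometry

variable {F : Type*} [NormedAddCommGroup F] [InnerProductSpace ℝ F]

theorem inversion_zero_one (x : F) : inversion 0 1 x = (‖x‖ ^ 2)⁻¹ • x := by
  simp [inversion]

theorem fderiv_inversion_zero_one_apply {y : F} (hy : y ≠ 0) (v : F) :
    fderiv ℝ (inversion 0 1) y v = (‖y‖ ^ 2)⁻¹ • (v - (2 * ⟪y, v⟫ / ‖y‖ ^ 2) • y) := by
  rw [(hasFDerivAt_inversion hy).fderiv]
  simp [Submodule.reflection_orthogonal_apply, Submodule.reflection_singleton_apply,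
    ← smul_assoc, mul_div_assoc]

theorem fderiv_inversion_zero_one_inversion_sub {x : F} (hx : x ≠ 0) (a : F) :
    fderiv ℝ (inversion 0 1) (inversion 0 1 x) (inversion 0 1 x - a) =
      (2 * ⟪x, a⟫) • x - x - ‖x‖ ^ 2 • a := by
  have hx2 : ‖x‖ ^ 2 ≠ 0 := by positivity
  have hy : inversion 0 1 x ≠ 0 := by simpa [inversion_zero_one, hx2] using hx
  rw [fderiv_inversion_zero_one_apply hy, inversion_zero_one]
  simp only [norm_smul, inner_sub_right, inner_smul_left, inner_smul_right,
    real_inner_self_eq_norm_sq, mul_pow, norm_inv, norm_pow, Real.norm_eq_abs, abs_norm,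
    conj_trivial]
  match_scalars <;> field_simp
  ring

end EuclideanGeometry

theorem WithLp.fderiv_ofLp_comp_toLp {𝕜 E G : Type*} [NontriviallyNormedField 𝕜]
    [NormedAddCommGroup E] [NormedSpace 𝕜 E] [NormedAddCommGroup G] [NormedSpace 𝕜 G]
    (f : WithLp 2 (E × G) → WithLp 2 (E × G)) (p v : E × G) :
    fderiv 𝕜 (fun q => ofLp (f (toLp 2 q))) p v = ofLp (fderiv 𝕜 f (toLp 2 p) (toLp 2 v)) := by
  let e := prodContinuousLinearEquiv 2 𝕜 E G
  have h := e.comp_fderiv (f := f ∘ e.symm) (x := p)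
  rw [e.symm.comp_right_fderiv] at h
  exact congrArg (· v) h

theorem norm_toLp_sq_eq_normSq_add_sq (p : ℂ × ℝ) : ‖toLp 2 p‖ ^ 2 = normSq p.1 + p.2 ^ 2 := by
  simp [prod_norm_sq_eq_of_L2, Complex.sq_norm]

theorem ofLp_inversion_zero_one_toLp (p : ℂ × ℝ) :
    ofLp (inversion 0 1 (toLp 2 p)) =
      (p.1 / ((normSq p.1 + p.2 ^ 2 : ℝ) : ℂ), p.2 / (normSq p.1 + p.2 ^ 2)) := by
  rw [inversion_zero_one, norm_toLp_sq_eq_normSq_add_sq]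
  ext <;> simp [div_eq_inv_mul]

theorem stmt5_general (Φ : ℂ × ℝ → ℂ × ℝ)
    (hΦ : ∀ p : ℂ × ℝ, Φ p = (p.1 / ((Complex.normSq p.1 + p.2 ^ 2 : ℝ) : ℂ),
      p.2 / (Complex.normSq p.1 + p.2 ^ 2)))
    (ζ₀ : ℂ) (ζ₀' : ℂ) (hζ₀' : ζ₀' = ζ₀ / ((Complex.normSq ζ₀ : ℝ) : ℂ))
    (ζ : ℂ) (w : ℝ) (hw : 0 < w) :
    fderiv ℝ Φ (Φ (ζ, w)) (((Φ (ζ, w)).1 - ζ₀', (Φ (ζ, w)).2)) =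
      (- (w : ℂ) ^ 2 / (starRingEnd ℂ) ζ₀ + ζ ^ 2 / ζ₀ - ζ,
        2 * w * (ζ / ζ₀).re - w) := by
  have hΦ' : Φ = fun q => ofLp (inversion (0 : WithLp 2 (ℂ × ℝ)) 1 (toLp 2 q)) :=
    funext fun q => (hΦ q).trans (ofLp_inversion_zero_one_toLp q).symm
  have hx : toLp 2 (ζ, w) ≠ 0 := fun h => hw.ne' (congrArg (fun y => (ofLp y).2) h)
  have hv : ((Φ (ζ, w)).1 - ζ₀', (Φ (ζ, w)).2) =
      ofLp (inversion 0 1 (toLp 2 (ζ, w)) - toLp 2 (ζ₀', 0)) := by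
    ext <;> simp [hΦ']
  replace hζ₀' : ζ₀' = (starRingEnd ℂ ζ₀)⁻¹ := by
    rw [hζ₀', inv_def, conj_conj, normSq_conj, ofReal_inv, div_eq_mul_inv]
  have hinner : ⟪toLp 2 (ζ, w), toLp 2 (ζ₀', 0)⟫ = (ζ / ζ₀).re := by
    rw [prod_inner_apply, hζ₀', Complex.inner, ← map_inv₀, ← map_mul, conj_re, inner_zero_right,
      add_zero, div_eq_inv_mul]
  rw [hv, hΦ', fderiv_ofLp_comp_toLp, toLp_ofLp, fderiv_inversion_zero_one_inversion_sub hx,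
    hinner, norm_toLp_sq_eq_normSq_add_sq]
  simp only [ofLp_sub, ofLp_smul, Prod.smul_mk, Prod.mk_sub_mk, real_smul, smul_eq_mul,
    Prod.mk.injEq]
  constructor
  · push_cast
    rw [hζ₀', re_eq_add_conj, map_div₀, ← mul_conj]
    ring
  · ring

/-- Lemma (killingtrans): the pushforward under the inversion
`Φ(ξ,s) = (ξ,s)/(|ξ|²+s²)` of the Killing field `Z(ξ,s) = (ξ − ζ₀′, s)` of the
translation along the geodesic `(ζ₀′, ∞)` is the Killing field of the
translation along `(ζ₀, 0)`:
`dΦ_{Φ(P)}(Z(Φ(P))) = (−w²/ζ̄₀ + ζ²/ζ₀ − ζ, 2w·Re(ζ/ζ₀) − w)` for `P = (ζ,w)`, `w > 0`. -/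
theorem stmt5 (Φ : ℂ × ℝ → ℂ × ℝ)
    (hΦ : ∀ p : ℂ × ℝ, Φ p = (p.1 / ((Complex.normSq p.1 + p.2 ^ 2 : ℝ) : ℂ),
      p.2 / (Complex.normSq p.1 + p.2 ^ 2)))
    (ζ₀ : ℂ) (hζ₀ : ζ₀ ≠ 0) (ζ₀' : ℂ) (hζ₀' : ζ₀' = ζ₀ / ((Complex.normSq ζ₀ : ℝ) : ℂ))
    (ζ : ℂ) (w : ℝ) (hw : 0 < w) :
    fderiv ℝ Φ (Φ (ζ, w)) (((Φ (ζ, w)).1 - ζ₀', (Φ (ζ, w)).2)) =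
      (- (w : ℂ) ^ 2 / (starRingEnd ℂ) ζ₀ + ζ ^ 2 / ζ₀ - ζ,
        2 * w * (ζ / ζ₀).re - w) :=
  stmt5_general Φ hΦ ζ₀ ζ₀' hζ₀' ζ w hw
end

section
/- Let Φ : (ℂ × ℝ) \ {0} → ℂ × ℝ be the inversion Φ(ξ, s) = (ξ/(|ξ|² + s²), s/(|ξ|² + s²)). Let ζ₀ ∈ ℂ with ζ₀ ≠ 0 and set ζ₀′ = ζ₀/|ζ₀|². Then for every (ζ, w) ∈ ℂ × ℝ with w > 0, writing (ζ′, w′) = Φ(ζ, w), the negative of the real Fréchet derivative of Φ at (ζ′, w′) applied to the vector (i·(ζ′ − ζ₀′), 0) equals (i·w²/conj(ζ₀) + i·ζ²/ζ₀ − i·ζ, −2w·Im(ζ/ζ₀)). -/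
/-!
Write `N(q) = |q₁|² + |q₂|²` and `Φ(q) = q / N(q)`. Differentiating `N⁻¹ • id` and evaluating at
`Φ(P)`, where `N(Φ P) = N(P)⁻¹`, gives `dΦ_{Φ(P)} v = N(P) v - 2 ⟪P, v⟫ P`. For
`v = (i(ζ' - ζ₀'), 0)` the term `iζ'` is orthogonal to `ζ`, and `ζ₀' = 1 / conj ζ₀`, so
`⟪P, v⟫ = -Im(ζ/ζ₀)`. The claim follows from `N(P) = ζ conj ζ + w²` and
`2i Im u = u - conj u`.
-/

open Complex ComplexConjugate

section Inversion

variable {E F : Type*} [NormedAddCommGroup E] [InnerProductSpace ℝ E]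
  [NormedAddCommGroup F] [InnerProductSpace ℝ F]

/-- The Euclidean square norm on `E × F` (the norm of the product type is the sup norm). -/
def prodNormSq (q : E × F) : ℝ := ‖q.1‖ ^ 2 + ‖q.2‖ ^ 2

noncomputable def inversion (q : E × F) : E × F := (prodNormSq q)⁻¹ • q

theorem prodNormSq_smul (c : ℝ) (q : E × F) : prodNormSq (c • q) = c ^ 2 * prodNormSq q := by
  simp only [prodNormSq, Prod.smul_fst, Prod.smul_snd, norm_smul, mul_pow, Real.norm_eq_abs,
    sq_abs]
  ring

theorem prodNormSq_inversion (q : E × F) : prodNormSq (inversion q) = (prodNormSq q)⁻¹ := by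
  rw [inversion, prodNormSq_smul]
  rcases eq_or_ne (prodNormSq q) 0 with h | h
  · simp [h]
  · field_simp

theorem hasFDerivAt_prodNormSq (p : E × F) :
    HasFDerivAt prodNormSq
      (2 • ((innerSL ℝ p.1).comp (ContinuousLinearMap.fst ℝ E F) +
        (innerSL ℝ p.2).comp (ContinuousLinearMap.snd ℝ E F))) p := by
  rw [smul_add]
  exact hasFDerivAt_fst.norm_sq.add hasFDerivAt_snd.norm_sq

theorem fderiv_inversion_apply {p : E × F} (hp : prodNormSq p ≠ 0) (v : E × F) :
    fderiv ℝ inversion p v = (prodNormSq p)⁻¹ • v -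
      (2 * (inner ℝ p.1 v.1 + inner ℝ p.2 v.2) / prodNormSq p ^ 2) • p := by
  have h : HasFDerivAt inversion _ p :=
    ((hasDerivAt_inv hp).comp_hasFDerivAt p (hasFDerivAt_prodNormSq p)).smul (hasFDerivAt_id p)
  rw [h.fderiv]
  simp only [Function.comp_apply, smul_add, neg_smul, add_apply, smul_apply,
    ContinuousLinearMap.id_apply, ContinuousLinearMap.smulRight_apply, neg_apply,
    ContinuousLinearMap.comp_apply, ContinuousLinearMap.coe_fst', ContinuousLinearMap.coe_snd',
    coe_innerSL_apply, nsmul_eq_mul, Nat.cast_ofNat, smul_eq_mul]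
  rw [sub_eq_add_neg, ← neg_smul]
  congr 2
  ring

theorem fderiv_inversion_inversion_apply {q : E × F} (hq : prodNormSq q ≠ 0) (v : E × F) :
    fderiv ℝ inversion (inversion q) v =
      prodNormSq q • v - (2 * (inner ℝ q.1 v.1 + inner ℝ q.2 v.2)) • q := by
  rw [fderiv_inversion_apply (by rw [prodNormSq_inversion]; exact inv_ne_zero hq),
    prodNormSq_inversion, inv_inv, inversion]
  simp only [Prod.smul_fst, Prod.smul_snd, real_inner_smul_left, smul_smul]
  congr 2
  field_simp

end Inversion

theorem prodNormSq_complex_real (q : ℂ × ℝ) : prodNormSq q = normSq q.1 + q.2 ^ 2 := by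
  rw [prodNormSq, Complex.sq_norm, Real.norm_eq_abs, sq_abs]

theorem inversion_complex_real (q : ℂ × ℝ) :
    inversion q = (q.1 / (prodNormSq q : ℂ), q.2 / prodNormSq q) := by
  simp only [inversion, Prod.smul_def, real_smul, smul_eq_mul, ofReal_inv, div_eq_inv_mul]

theorem div_normSq_eq_inv_conj (c : ℂ) : c / (normSq c : ℂ) = (conj c)⁻¹ := by
  rw [inv_def, conj_conj, normSq_conj, div_eq_mul_inv, ofReal_inv]

theorem inner_mul_I_smul_sub_inv_conj (r : ℝ) (z c : ℂ) :
    inner ℝ z (I * (r • z - (conj c)⁻¹)) = -(z / c).im := by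
  rw [Complex.inner]
  simp [mul_re, mul_im, div_im, inv_re, inv_im]
  ring

theorem stmt6_general (Φ : ℂ × ℝ → ℂ × ℝ)
    (hΦ : ∀ p : ℂ × ℝ, Φ p = (p.1 / ((Complex.normSq p.1 + p.2 ^ 2 : ℝ) : ℂ),
      p.2 / (Complex.normSq p.1 + p.2 ^ 2)))
    (ζ₀ : ℂ) (ζ₀' : ℂ) (hζ₀' : ζ₀' = ζ₀ / ((Complex.normSq ζ₀ : ℝ) : ℂ))
    (ζ : ℂ) (w : ℝ) (hw : 0 < w) :
    - fderiv ℝ Φ (Φ (ζ, w)) ((Complex.I * ((Φ (ζ, w)).1 - ζ₀'), (0 : ℝ))) =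
      (Complex.I * (w : ℂ) ^ 2 / (starRingEnd ℂ) ζ₀ + Complex.I * ζ ^ 2 / ζ₀ - Complex.I * ζ,
        - (2 * w * (ζ / ζ₀).im)) := by
  obtain rfl : Φ = inversion := funext fun q => by
    rw [hΦ, inversion_complex_real, prodNormSq_complex_real]
  have hN : prodNormSq (ζ, w) ≠ 0 := by
    rw [prodNormSq_complex_real]
    exact (add_pos_of_nonneg_of_pos (normSq_nonneg ζ) (pow_pos hw 2)).ne'
  have hNC : (prodNormSq (ζ, w) : ℂ) = ζ * conj ζ + (w : ℂ) ^ 2 := by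
    rw [prodNormSq_complex_real, mul_conj]
    push_cast
    rfl
  have hIm : ζ / ζ₀ - conj ζ / conj ζ₀ = 2 * ((ζ / ζ₀).im : ℂ) * I := by
    simpa [map_div₀] using sub_conj (ζ / ζ₀)
  have hΦP : (inversion (ζ, w)).1 = (prodNormSq (ζ, w))⁻¹ • ζ := rfl
  rw [hζ₀', div_normSq_eq_inv_conj, fderiv_inversion_inversion_apply hN, hΦP]
  simp only [inner_mul_I_smul_sub_inv_conj, inner_zero_right, add_zero]
  simp only [real_smul, ofReal_inv, Prod.smul_mk, smul_eq_mul, mul_zero, mul_neg, neg_smul,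
    ofReal_mul, ofReal_ofNat, Prod.neg_mk, Prod.mk_sub_mk, sub_neg_eq_add, zero_add, Prod.mk.injEq]
  refine ⟨?_, by ring⟩
  have hN' : (prodNormSq (ζ, w) : ℂ) ≠ 0 := ofReal_ne_zero.2 hN
  field_simp
  linear_combination (I / conj ζ₀) * hNC - I * ζ * hIm - 2 * ζ * ((ζ / ζ₀).im : ℂ) * I_sq

/-- Lemma (killingrot): since the inversion `Φ(ξ,s) = (ξ,s)/(|ξ|²+s²)` is an
indirect isometry, the Killing field of the rotation about the geodesic
`(ζ₀, 0)` is `−Φ_*Z` where `Z(ξ,s) = (i(ξ − ζ₀′), 0)` is the Killing field of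
the rotation about `(ζ₀′, ∞)`:
`−dΦ_{Φ(P)}(Z(Φ(P))) = (iw²/ζ̄₀ + iζ²/ζ₀ − iζ, −2w·Im(ζ/ζ₀))` for `P = (ζ,w)`, `w > 0`. -/
theorem stmt6 (Φ : ℂ × ℝ → ℂ × ℝ)
    (hΦ : ∀ p : ℂ × ℝ, Φ p = (p.1 / ((Complex.normSq p.1 + p.2 ^ 2 : ℝ) : ℂ),
      p.2 / (Complex.normSq p.1 + p.2 ^ 2)))
    (ζ₀ : ℂ) (hζ₀ : ζ₀ ≠ 0) (ζ₀' : ℂ) (hζ₀' : ζ₀' = ζ₀ / ((Complex.normSq ζ₀ : ℝ) : ℂ))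
    (ζ : ℂ) (w : ℝ) (hw : 0 < w) :
    - fderiv ℝ Φ (Φ (ζ, w)) ((Complex.I * ((Φ (ζ, w)).1 - ζ₀'), (0 : ℝ))) =
      (Complex.I * (w : ℂ) ^ 2 / (starRingEnd ℂ) ζ₀ + Complex.I * ζ ^ 2 / ζ₀ - Complex.I * ζ,
        - (2 * w * (ζ / ζ₀).im)) :=
  stmt6_general Φ hΦ ζ₀ ζ₀' hζ₀' ζ w hw
end

section
/- Let μ be a real number with μ > 0 and μ ≠ 1, let r > 0, and let f₁, f₂, g₁, g₂ be holomorphic on the ball B(0, r) ⊆ ℂ with f₁(0) = f₂(0) = g₁(0) = g₂(0) = 1. Define, for z ∈ B(0, r) with z ≠ 0 and z not in the nonpositive real axis, A(z) = z^{(1−μ)/2}·f₂(z), B(z) = ((μ−1)/(μ+1))·z^{(1+μ)/2}·g₂(z), C(z) = ((μ²−1)/(4μ))·z^{(−1−μ)/2}·f₁(z), D(z) = ((1+μ)²/(4μ))·z^{(μ−1)/2}·g₁(z), where z^a denotes the principal complex power. Then z·(C(z)·B′(z) − D(z)·A′(z)) tends to (μ² − 1)/4 as z tends to 0 within the complement of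 the nonpositive real axis. (Equivalently, the residue at 0 of the one-form C dB − D dA equals (μ² − 1)/4.) -/
open Complex Filter Topology

/-! Writing `C = c_C z^{-a} f₁` and `B = c_B z^a g₂` with `a = (1 + μ)/2`, the product
`z C B′` equals `c_C c_B f₁ (a g₂ + z g₂′)`, and likewise `z D A′ = c_D g₁ (a₁ f₂ + z f₂′)` with
`a₁ = (1 − μ)/2`: the branch of `z^a` cancels against `z^{-a}`. The right-hand sides are holomorphic
at `0`, so the limit is their value `c_C c_B a − c_D a₁ = (μ² − 1)/4` there. -/

theorem mul_cpow_neg_mul_deriv_const_mul_cpow_mul {a c z : ℂ} {f : ℂ → ℂ}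
    (hz : z ∈ slitPlane) (hf : DifferentiableAt ℂ f z) :
    z * (z ^ (-a) * deriv (fun w => c * w ^ a * f w) z) = c * (a * f z + z * deriv f z) := by
  have hz0 : z ≠ 0 := slitPlane_ne_zero hz
  have hza : z ^ a ≠ 0 := by simp [cpow_eq_zero_iff, hz0]
  have hderiv : deriv (fun w => c * w ^ a * f w) z
      = c * (a * z ^ (a - 1)) * f z + c * z ^ a * deriv f z :=
    (((hasStrictDerivAt_cpow_const hz).hasDerivAt.const_mul c).mul hf.hasDerivAt).deriv
  rw [hderiv, cpow_neg, cpow_sub _ _ hz0, cpow_one]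
  field_simp

theorem tendsto_mul_add_mul_deriv {f : ℂ → ℂ} (hf : ∀ᶠ z in 𝓝 0, DifferentiableAt ℂ f z)
    (a : ℂ) : Tendsto (fun z => a * f z + z * deriv f z) (𝓝 0) (𝓝 (a * f 0)) := by
  have hfa : AnalyticAt ℂ f 0 := analyticAt_iff_eventually_differentiableAt.mpr hf
  have hcont : ContinuousAt (fun z => a * f z + z * deriv f z) 0 :=
    (continuousAt_const.mul hfa.continuousAt).add (continuousAt_id.mul hfa.deriv.continuousAt)
  simpa using hcont.tendsto

theorem tendsto_mul_cpow_neg_mul_deriv_cpow_mul {a b c : ℂ} {f g : ℂ → ℂ}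
    (hf : ∀ᶠ z in 𝓝 0, DifferentiableAt ℂ f z) (hg : ContinuousAt g 0) :
    Tendsto (fun z => z * (b * z ^ (-a) * g z * deriv (fun w => c * w ^ a * f w) z))
      (𝓝[slitPlane] 0) (𝓝 (b * c * a * g 0 * f 0)) := by
  have hlim : Tendsto (fun z => b * g z * (c * (a * f z + z * deriv f z))) (𝓝 0)
      (𝓝 (b * g 0 * (c * (a * f 0)))) :=
    (tendsto_const_nhds.mul hg.tendsto).mul (tendsto_const_nhds.mul (tendsto_mul_add_mul_deriv hf a))
  have heq : ∀ᶠ z in 𝓝[slitPlane] 0, b * g z * (c * (a * f z + z * deriv f z))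
      = z * (b * z ^ (-a) * g z * deriv (fun w => c * w ^ a * f w) z) := by
    filter_upwards [self_mem_nhdsWithin, nhdsWithin_le_nhds hf] with z hz hfz
    rw [← mul_cpow_neg_mul_deriv_const_mul_cpow_mul hz hfz]
    ring
  convert (hlim.mono_left nhdsWithin_le_nhds).congr' heq using 2
  ring

theorem stmt8_general (μ : ℝ) (hμ : 0 < μ) (r : ℝ) (hr : 0 < r)
    (f₁ f₂ g₁ g₂ : ℂ → ℂ)
    (hf₁ : DifferentiableOn ℂ f₁ (Metric.ball 0 r))
    (hf₂ : DifferentiableOn ℂ f₂ (Metric.ball 0 r))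
    (hg₁ : DifferentiableOn ℂ g₁ (Metric.ball 0 r))
    (hg₂ : DifferentiableOn ℂ g₂ (Metric.ball 0 r))
    (hf₁0 : f₁ 0 = 1) (hf₂0 : f₂ 0 = 1) (hg₁0 : g₁ 0 = 1) (hg₂0 : g₂ 0 = 1)
    (A B C D : ℂ → ℂ)
    (hA : ∀ z, A z = z ^ (((1 - (μ : ℂ)) / 2) : ℂ) * f₂ z)
    (hB : ∀ z, B z = (((μ : ℂ) - 1) / ((μ : ℂ) + 1)) * z ^ (((1 + (μ : ℂ)) / 2) : ℂ) * g₂ z)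
    (hC : ∀ z, C z = (((μ : ℂ) ^ 2 - 1) / (4 * (μ : ℂ))) * z ^ (((-1 - (μ : ℂ)) / 2) : ℂ) * f₁ z)
    (hD : ∀ z, D z = (((1 + (μ : ℂ)) ^ 2) / (4 * (μ : ℂ))) * z ^ ((((μ : ℂ) - 1) / 2) : ℂ) * g₁ z) :
    Filter.Tendsto (fun z : ℂ => z * (C z * deriv B z - D z * deriv A z))
      (nhdsWithin 0 Complex.slitPlane)
      (nhds (((μ : ℂ) ^ 2 - 1) / 4)) := by
  have hdiff {g : ℂ → ℂ} (hg : DifferentiableOn ℂ g (Metric.ball 0 r)) :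
      ∀ᶠ z in 𝓝 0, DifferentiableAt ℂ g z :=
    (Metric.isOpen_ball.eventually_mem (Metric.mem_ball_self hr)).mono
      fun z hz => hg.differentiableAt (Metric.isOpen_ball.mem_nhds hz)
  have hcont {g : ℂ → ℂ} (hg : DifferentiableOn ℂ g (Metric.ball 0 r)) : ContinuousAt g 0 :=
    hg.continuousOn.continuousAt (Metric.ball_mem_nhds 0 hr)
  have hA' : A = fun w => 1 * w ^ ((1 - (μ : ℂ)) / 2) * f₂ w :=
    funext fun w => by rw [hA, one_mul]
  have hC' : C = fun w => ((μ : ℂ) ^ 2 - 1) / (4 * μ) * w ^ (-((1 + (μ : ℂ)) / 2)) * f₁ w :=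
    funext fun w => by rw [hC, show (-1 - (μ : ℂ)) / 2 = -((1 + μ) / 2) by ring]
  have hD' : D = fun w => (1 + (μ : ℂ)) ^ 2 / (4 * μ) * w ^ (-((1 - (μ : ℂ)) / 2)) * g₁ w :=
    funext fun w => by rw [hD, show ((μ : ℂ) - 1) / 2 = -((1 - μ) / 2) by ring]
  have hμ0 : (μ : ℂ) ≠ 0 := by exact_mod_cast hμ.ne'
  have hμ_add_one : (μ : ℂ) + 1 ≠ 0 := by exact_mod_cast (by linarith : μ + 1 ≠ 0)
  rw [hA', funext hB, hC', hD']
  convert (tendsto_mul_cpow_neg_mul_deriv_cpow_mul (a := (1 + (μ : ℂ)) / 2)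
      (b := ((μ : ℂ) ^ 2 - 1) / (4 * μ)) (c := ((μ : ℂ) - 1) / (μ + 1)) (hdiff hg₂) (hcont hf₁)).sub
    (tendsto_mul_cpow_neg_mul_deriv_cpow_mul (a := (1 - (μ : ℂ)) / 2)
      (b := (1 + (μ : ℂ)) ^ 2 / (4 * μ)) (c := 1) (hdiff hf₂) (hcont hg₁)) using 1
  · ext z
    ring
  · congr 1
    rw [hf₁0, hf₂0, hg₁0, hg₂0]
    field_simp
    ring

/-- For the canonical Bryant representation of a canonical catenoidal end of
growth `1 − μ`, the residue at `0` of the one-form `C dB − D dA` equals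
`(μ² − 1)/4`, expressed as the limit of `z(C B′ − D A′)` as `z → 0` off the
nonpositive real axis. -/
theorem stmt8 (μ : ℝ) (hμ : 0 < μ) (hμ1 : μ ≠ 1) (r : ℝ) (hr : 0 < r)
    (f₁ f₂ g₁ g₂ : ℂ → ℂ)
    (hf₁ : DifferentiableOn ℂ f₁ (Metric.ball 0 r))
    (hf₂ : DifferentiableOn ℂ f₂ (Metric.ball 0 r))
    (hg₁ : DifferentiableOn ℂ g₁ (Metric.ball 0 r))
    (hg₂ : DifferentiableOn ℂ g₂ (Metric.ball 0 r))
    (hf₁0 : f₁ 0 = 1) (hf₂0 : f₂ 0 = 1) (hg₁0 : g₁ 0 = 1) (hg₂0 : g₂ 0 = 1)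
    (A B C D : ℂ → ℂ)
    (hA : ∀ z, A z = z ^ (((1 - (μ : ℂ)) / 2) : ℂ) * f₂ z)
    (hB : ∀ z, B z = (((μ : ℂ) - 1) / ((μ : ℂ) + 1)) * z ^ (((1 + (μ : ℂ)) / 2) : ℂ) * g₂ z)
    (hC : ∀ z, C z = (((μ : ℂ) ^ 2 - 1) / (4 * (μ : ℂ))) * z ^ (((-1 - (μ : ℂ)) / 2) : ℂ) * f₁ z)
    (hD : ∀ z, D z = (((1 + (μ : ℂ)) ^ 2) / (4 * (μ : ℂ))) * z ^ ((((μ : ℂ) - 1) / 2) : ℂ) * g₁ z) :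
    Filter.Tendsto (fun z : ℂ => z * (C z * deriv B z - D z * deriv A z))
      (nhdsWithin 0 Complex.slitPlane)
      (nhds (((μ : ℂ) ^ 2 - 1) / 4)) :=
  stmt8_general μ hμ r hr f₁ f₂ g₁ g₂ hf₁ hf₂ hg₁ hg₂ hf₁0 hf₂0 hg₁0 hg₂0 A B C D hA hB hC hD
end

section
/- Let μ be a real number with μ > 0 and μ ≠ 1, let r > 0, and let f₁, f₂, g₁, g₂ be holomorphic on the ball B(0, r) ⊆ ℂ with f₁(0) = f₂(0) = g₁(0) = g₂(0) = 1. Define, for z ∈ B(0, r) with z ≠ 0 and z not in the nonpositive real axis, A(z) = z^{(1−μ)/2}·f₂(z), B(z) = ((μ−1)/(μ+1))·z^{(1+μ)/2}·g₂(z), C(z) = ((μ²−1)/(4μ))·z^{(−1−μ)/2}·f₁(z), D(z) = ((1+μ)²/(4μ))·z^{(μ−1)/2}·g₁(z), where z^a denotes the principal complex power. If A(z)·D(z) − B(z)·C(z) = 1 for all such z, then (1+μ)²·(f₂′(0) + g₁′(0)) = (μ−1)²·(f₁′(0) + g₂′(0)). -/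
open Complex

/-- The order-one coefficient of the determinant identity `A D − B C = 1` for the
canonical Bryant representation of a canonical catenoidal end:
`(1+μ)²(f₂′(0) + g₁′(0)) = (μ−1)²(f₁′(0) + g₂′(0))`. -/
theorem stmt9 (μ : ℝ) (hμ : 0 < μ) (hμ1 : μ ≠ 1) (r : ℝ) (hr : 0 < r)
    (f₁ f₂ g₁ g₂ : ℂ → ℂ)
    (hf₁ : DifferentiableOn ℂ f₁ (Metric.ball 0 r))
    (hf₂ : DifferentiableOn ℂ f₂ (Metric.ball 0 r))
    (hg₁ : DifferentiableOn ℂ g₁ (Metric.ball 0 r))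
    (hg₂ : DifferentiableOn ℂ g₂ (Metric.ball 0 r))
    (hf₁0 : f₁ 0 = 1) (hf₂0 : f₂ 0 = 1) (hg₁0 : g₁ 0 = 1) (hg₂0 : g₂ 0 = 1)
    (A B C D : ℂ → ℂ)
    (hA : ∀ z, A z = z ^ (((1 - (μ : ℂ)) / 2) : ℂ) * f₂ z)
    (hB : ∀ z, B z = (((μ : ℂ) - 1) / ((μ : ℂ) + 1)) * z ^ (((1 + (μ : ℂ)) / 2) : ℂ) * g₂ z)
    (hC : ∀ z, C z = (((μ : ℂ) ^ 2 - 1) / (4 * (μ : ℂ))) * z ^ (((-1 - (μ : ℂ)) / 2) : ℂ) * f₁ z)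
    (hD : ∀ z, D z = (((1 + (μ : ℂ)) ^ 2) / (4 * (μ : ℂ))) * z ^ ((((μ : ℂ) - 1) / 2) : ℂ) * g₁ z)
    (hdet : ∀ z ∈ Metric.ball (0 : ℂ) r, z ≠ 0 → z ∈ Complex.slitPlane →
      A z * D z - B z * C z = 1) :
    ((1 + (μ : ℂ)) ^ 2) * (deriv f₂ 0 + deriv g₁ 0) =
      (((μ : ℂ) - 1) ^ 2) * (deriv f₁ 0 + deriv g₂ 0) := by
  have hμ0 : (μ : ℂ) ≠ 0 := by exact_mod_cast hμ.ne'
  have hμp1 : (μ : ℂ) + 1 ≠ 0 := by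
    have : (0:ℝ) < μ + 1 := by linarith
    exact_mod_cast this.ne'
  set h : ℂ → ℂ := fun z =>
    (1 + (μ:ℂ))^2 * (f₂ z * g₁ z) - ((μ:ℂ) - 1)^2 * (f₁ z * g₂ z) - 4 * (μ:ℂ) with hh
  have key : ∀ z ∈ Metric.ball (0:ℂ) r, z ≠ 0 → z ∈ Complex.slitPlane → h z = 0 := by
    intro z hz hz0 hzs
    have hd := hdet z hz hz0 hzs
    rw [hA, hB, hC, hD] at hd
    have e1 : z ^ (((1 - (μ:ℂ)) / 2) : ℂ) * z ^ ((((μ:ℂ) - 1) / 2) : ℂ) = 1 := by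
      rw [← Complex.cpow_add _ _ hz0,
        show ((1 - (μ:ℂ)) / 2 + ((μ:ℂ) - 1) / 2) = 0 by ring, Complex.cpow_zero]
    have e2 : z ^ (((1 + (μ:ℂ)) / 2) : ℂ) * z ^ (((-1 - (μ:ℂ)) / 2) : ℂ) = 1 := by
      rw [← Complex.cpow_add _ _ hz0,
        show ((1 + (μ:ℂ)) / 2 + (-1 - (μ:ℂ)) / 2) = 0 by ring, Complex.cpow_zero]
    have ec : ((μ:ℂ) - 1) / ((μ:ℂ) + 1) * (((μ:ℂ)^2 - 1) / (4 * μ)) = ((μ:ℂ) - 1)^2 / (4 * μ) := by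
      field_simp
      ring
    have hd2 : (1 + (μ:ℂ))^2 / (4 * μ) * (f₂ z * g₁ z) -
        ((μ:ℂ) - 1)^2 / (4 * μ) * (f₁ z * g₂ z) = 1 := by
      rw [← ec]
      linear_combination hd - ((1 + (μ:ℂ))^2 / (4 * μ)) * (f₂ z * g₁ z) * e1 +
        (((μ:ℂ) - 1) / ((μ:ℂ) + 1) * (((μ:ℂ)^2 - 1) / (4 * μ))) * (f₁ z * g₂ z) * e2
    field_simp at hd2
    simp only [hh]
    linear_combination hd2
  -- differentiability at 0
  have hball0 : (0:ℂ) ∈ Metric.ball (0:ℂ) r := by simpa using hr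
  have hnhds := Metric.isOpen_ball.mem_nhds hball0
  have Hf₁ : HasDerivAt f₁ (deriv f₁ 0) 0 := (hf₁.differentiableAt hnhds).hasDerivAt
  have Hf₂ : HasDerivAt f₂ (deriv f₂ 0) 0 := (hf₂.differentiableAt hnhds).hasDerivAt
  have Hg₁ : HasDerivAt g₁ (deriv g₁ 0) 0 := (hg₁.differentiableAt hnhds).hasDerivAt
  have Hg₂ : HasDerivAt g₂ (deriv g₂ 0) 0 := (hg₂.differentiableAt hnhds).hasDerivAt
  set D0 : ℂ := (1 + (μ:ℂ))^2 * (deriv f₂ 0 * g₁ 0 + f₂ 0 * deriv g₁ 0) -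
      ((μ:ℂ) - 1)^2 * (deriv f₁ 0 * g₂ 0 + f₁ 0 * deriv g₂ 0) with hD0
  have Hh : HasDerivAt h D0 0 := by
    have := (((Hf₂.mul Hg₁).const_mul ((1 + (μ:ℂ))^2)).sub
      ((Hf₁.mul Hg₂).const_mul (((μ:ℂ) - 1)^2))).sub_const (4 * (μ:ℂ))
    simpa [hh, hD0] using this
  have h0 : h 0 = 0 := by
    simp only [hh, hf₁0, hf₂0, hg₁0, hg₂0]
    ring
  -- sequence along the positive real axis
  set u : ℕ → ℂ := fun n => ((r / (n + 2) : ℝ) : ℂ) with hu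
  have hupos : ∀ n : ℕ, (0:ℝ) < r / (n + 2) := by
    intro n
    positivity
  have hu0 : ∀ n : ℕ, u n ≠ 0 := by
    intro n
    simp only [hu, ne_eq, Complex.ofReal_eq_zero]
    exact (hupos n).ne'
  have huball : ∀ n : ℕ, u n ∈ Metric.ball (0:ℂ) r := by
    intro n
    simp only [hu, Metric.mem_ball, dist_zero_right, Complex.norm_real,
      Real.norm_eq_abs, abs_of_pos (hupos n)]
    rw [div_lt_iff₀ (by positivity)]
    nlinarith [hupos n]
  have huslit : ∀ n : ℕ, u n ∈ Complex.slitPlane := by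
    intro n
    rw [Complex.mem_slitPlane_iff]
    left
    simp only [hu, Complex.ofReal_re]
    exact hupos n
  have hzero : ∀ n : ℕ, h (u n) = 0 := fun n => key (u n) (huball n) (hu0 n) (huslit n)
  have hulim : Filter.Tendsto u Filter.atTop (nhdsWithin 0 {(0:ℂ)}ᶜ) := by
    apply tendsto_nhdsWithin_of_tendsto_nhds_of_eventually_within
    · have hreal : Filter.Tendsto (fun n : ℕ => r / (n + 2 : ℝ)) Filter.atTop (nhds 0) := by
        apply Filter.Tendsto.div_atTop tendsto_const_nhds
        exact Filter.tendsto_atTop_add_const_right _ 2 tendsto_natCast_atTop_atTop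
      have h2 := (Complex.continuous_ofReal.tendsto 0).comp hreal
      rw [hu]
      simpa only [Complex.ofReal_zero, Function.comp_def] using h2
    · exact Filter.Eventually.of_forall fun n => Set.mem_compl_singleton_iff.mpr (hu0 n)
  have hslope := (hasDerivAt_iff_tendsto_slope.mp Hh).comp hulim
  have hzeroslope : (fun n => slope h 0 (u n)) = fun _ => (0:ℂ) := by
    funext n
    simp [slope_def_field, hzero n, h0]
  have : Filter.Tendsto (fun _ : ℕ => (0:ℂ)) Filter.atTop (nhds D0) := by
    rw [← hzeroslope]
    exact hslope
  have hD00 : D0 = 0 := (tendsto_nhds_unique tendsto_const_nhds this).symm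
  rw [hD0, hf₁0, hf₂0, hg₁0, hg₂0] at hD00
  linear_combination hD00
end

section
/- Let μ be a real number with μ > 0 and μ ≠ 1, let r > 0, and let f₁, g₁ be holomorphic on the ball B(0, r) ⊆ ℂ with f₁(0) = g₁(0) = 1 and g₁′(0) = ((μ−1)/(μ+1))²·f₁′(0). Set Z = ((μ²−1)/(4μ))·f₁′(0) and K = (1+μ)²·(μ²−1)/(16μ²). Define, for z ∈ B(0, r) with z ≠ 0 and z not in the nonpositive real axis, C(z) = ((μ²−1)/(4μ))·z^{(−1−μ)/2}·f₁(z) and D(z) = ((1+μ)²/(4μ))·z^{(μ−1)/2}·g₁(z), where z^a denotes the principal complex power. Then (z²·(D(z)·C′(z) − C(z)·D′(z)) + μ·K)/z tends to (1 − μ²)·Z/2 as z tends to 0 within the complement of the nonpositive real axis. (Equivalently, D·C′ − C·D′ is meromorphic at 0 with a pole of order at most 2, with coefficient −μK in z^{−2}, and the residue at 0 of the one-form D dC − C dD equals (1 − μ²)·Z/2.) -/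
open Complex Filter Topology

/-! With `a = (-1 - μ)/2` and `b = (μ - 1)/2` we have `a + b = -1`, so the power factors of
`C = c₁ z^a f₁` and `D = c₂ z^b g₁` cancel in `z² (D C′ - C D′)`, leaving
`c₁ c₂ ((a - b) f₁ g₁ + z (f₁′ g₁ - f₁ g₁′)) = K (-μ f₁ g₁ + z (f₁′ g₁ - f₁ g₁′))`.
Adding `μK` and dividing by `z` gives a difference quotient at `0` of this holomorphic function,
whose limit `K ((1 - μ) f₁′(0) - (1 + μ) g₁′(0))` is `(1 - μ²) Z / 2` by the relation between
`g₁′(0)` and `f₁′(0)`. -/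

theorem tendsto_slope_mul_mul_add_mul_wronskian {𝕜 : Type*} [NontriviallyNormedField 𝕜]
    [CompleteSpace 𝕜] {f g : 𝕜 → 𝕜} (hf : AnalyticAt 𝕜 f 0) (hg : AnalyticAt 𝕜 g 0)
    (hf0 : f 0 = 1) (hg0 : g 0 = 1) (κ : 𝕜) :
    Tendsto (fun z => (κ * f z * g z + z * (deriv f z * g z - f z * deriv g z) - κ) / z)
      (𝓝[≠] 0) (𝓝 (κ * (deriv f 0 + deriv g 0) + (deriv f 0 - deriv g 0))) := by
  have hfg : HasDerivAt (fun z => f z * g z) (deriv f 0 + deriv g 0) 0 := by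
    simpa [hf0, hg0] using hf.differentiableAt.hasDerivAt.fun_mul hg.differentiableAt.hasDerivAt
  have hslope : Tendsto (fun z => (f z * g z - 1) / z) (𝓝[≠] 0) (𝓝 (deriv f 0 + deriv g 0)) := by
    simpa [hf0, hg0, div_eq_inv_mul] using hasDerivAt_iff_tendsto_slope_zero.mp hfg
  have hwronskian : Tendsto (fun z => deriv f z * g z - f z * deriv g z) (𝓝[≠] 0)
      (𝓝 (deriv f 0 - deriv g 0)) := by
    have := (hf.deriv.continuousAt.fun_mul hg.continuousAt).fun_sub
      (hf.continuousAt.fun_mul hg.deriv.continuousAt)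
    simpa [hf0, hg0] using this.tendsto.mono_left nhdsWithin_le_nhds
  refine ((hslope.const_mul κ).add hwronskian).congr' ?_
  filter_upwards [self_mem_nhdsWithin] with z (hz : z ≠ 0)
  field_simp
  ring

namespace Complex

theorem hasDerivAt_const_mul_cpow_mul {f : ℂ → ℂ} {f' z : ℂ} (c a : ℂ) (hz : z ∈ slitPlane)
    (hf : HasDerivAt f f' z) :
    HasDerivAt (fun w => c * w ^ a * f w) (c * z ^ (a - 1) * (a * f z + z * f')) z := by
  refine (((hasStrictDerivAt_cpow_const hz).hasDerivAt.const_mul c).fun_mul hf).congr_deriv ?_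
  have hz0 : z ≠ 0 := slitPlane_ne_zero hz
  rw [cpow_sub _ _ hz0, cpow_one]
  field_simp

theorem sq_mul_wronskian_const_mul_cpow_mul {f g : ℂ → ℂ} {f' g' z : ℂ} {a b : ℂ}
    (hab : a + b = -1) (c d : ℂ) (hz : z ∈ slitPlane) (hf : HasDerivAt f f' z)
    (hg : HasDerivAt g g' z) :
    z ^ 2 * (d * z ^ b * g z * deriv (fun w => c * w ^ a * f w) z
        - c * z ^ a * f z * deriv (fun w => d * w ^ b * g w) z)
      = c * d * ((a - b) * f z * g z + z * (f' * g z - f z * g')) := by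
  have hz0 : z ≠ 0 := slitPlane_ne_zero hz
  have hpow : z ^ a * z ^ b * z = 1 := by
    rw [← cpow_add _ _ hz0, hab, cpow_neg_one, inv_mul_cancel₀ hz0]
  rw [(hasDerivAt_const_mul_cpow_mul c a hz hf).deriv,
    (hasDerivAt_const_mul_cpow_mul d b hz hg).deriv, cpow_sub _ _ hz0, cpow_sub _ _ hz0, cpow_one]
  field_simp
  linear_combination (c * d * ((a - b) * f z * g z + z * (f' * g z - f z * g'))) * hpow

end Complex

theorem stmt10_general (μ : ℝ) (hμ : 0 < μ) (r : ℝ) (hr : 0 < r)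
    (f₁ g₁ : ℂ → ℂ)
    (hf₁ : DifferentiableOn ℂ f₁ (Metric.ball 0 r))
    (hg₁ : DifferentiableOn ℂ g₁ (Metric.ball 0 r))
    (hf₁0 : f₁ 0 = 1) (hg₁0 : g₁ 0 = 1)
    (hg₁' : deriv g₁ 0 = ((((μ : ℂ) - 1) / ((μ : ℂ) + 1)) ^ 2) * deriv f₁ 0)
    (Z K : ℂ)
    (hZ : Z = (((μ : ℂ) ^ 2 - 1) / (4 * (μ : ℂ))) * deriv f₁ 0)
    (hK : K = ((1 + (μ : ℂ)) ^ 2 * ((μ : ℂ) ^ 2 - 1)) / (16 * (μ : ℂ) ^ 2))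
    (C D : ℂ → ℂ)
    (hC : ∀ z, C z = (((μ : ℂ) ^ 2 - 1) / (4 * (μ : ℂ))) * z ^ (((-1 - (μ : ℂ)) / 2) : ℂ) * f₁ z)
    (hD : ∀ z, D z = (((1 + (μ : ℂ)) ^ 2) / (4 * (μ : ℂ))) * z ^ ((((μ : ℂ) - 1) / 2) : ℂ) * g₁ z) :
    Filter.Tendsto
      (fun z : ℂ => (z ^ 2 * (D z * deriv C z - C z * deriv D z) + (μ : ℂ) * K) / z)
      (nhdsWithin 0 Complex.slitPlane)
      (nhds ((1 - (μ : ℂ) ^ 2) * Z / 2)) := by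
  have hμ0 : (μ : ℂ) ≠ 0 := ofReal_ne_zero.mpr hμ.ne'
  have hμ1 : (μ : ℂ) + 1 ≠ 0 := by exact_mod_cast (by linarith : μ + 1 ≠ 0)
  have hball : Metric.ball (0 : ℂ) r ∈ 𝓝 0 := Metric.ball_mem_nhds 0 hr
  have hlim : K * (-μ * (deriv f₁ 0 + deriv g₁ 0) + (deriv f₁ 0 - deriv g₁ 0))
      = (1 - (μ : ℂ) ^ 2) * Z / 2 := by
    rw [hg₁', hZ, hK]
    field_simp
    ring
  rw [← hlim]
  refine (((tendsto_slope_mul_mul_add_mul_wronskian (hf₁.analyticAt hball)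
    (hg₁.analyticAt hball) hf₁0 hg₁0 (-μ)).const_mul K).mono_left
    (nhdsWithin_mono 0 fun _ => slitPlane_ne_zero)).congr' ?_
  filter_upwards [eventually_mem_nhdsWithin, nhdsWithin_le_nhds (s := slitPlane) hball]
    with z hz hzr
  rw [hC z, hD z, funext hC, funext hD, sq_mul_wronskian_const_mul_cpow_mul (by ring) _ _ hz
    (hf₁.differentiableAt (Metric.isOpen_ball.mem_nhds hzr)).hasDerivAt
    (hg₁.differentiableAt (Metric.isOpen_ball.mem_nhds hzr)).hasDerivAt, hK]
  field_simp
  ring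

/-- For the second row `C = ((μ²−1)/(4μ)) z^{(−1−μ)/2} f₁`,
`D = ((1+μ)²/(4μ)) z^{(μ−1)/2} g₁` of the canonical Bryant representation of a
canonical catenoidal end of axis `(Z, ∞)`, the coefficient `D C′ − C D′` has a
pole of order at most `2` at `0` with coefficient `−μK` in `z^{−2}`, and the
residue at `0` of the one-form `D dC − C dD` equals `(1 − μ²)Z/2`:
`(z²(D C′ − C D′) + μK)/z → (1 − μ²)Z/2` as `z → 0` off the branch cut. -/
theorem stmt10 (μ : ℝ) (hμ : 0 < μ) (hμ1 : μ ≠ 1) (r : ℝ) (hr : 0 < r)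
    (f₁ g₁ : ℂ → ℂ)
    (hf₁ : DifferentiableOn ℂ f₁ (Metric.ball 0 r))
    (hg₁ : DifferentiableOn ℂ g₁ (Metric.ball 0 r))
    (hf₁0 : f₁ 0 = 1) (hg₁0 : g₁ 0 = 1)
    (hg₁' : deriv g₁ 0 = ((((μ : ℂ) - 1) / ((μ : ℂ) + 1)) ^ 2) * deriv f₁ 0)
    (Z K : ℂ)
    (hZ : Z = (((μ : ℂ) ^ 2 - 1) / (4 * (μ : ℂ))) * deriv f₁ 0)
    (hK : K = ((1 + (μ : ℂ)) ^ 2 * ((μ : ℂ) ^ 2 - 1)) / (16 * (μ : ℂ) ^ 2))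
    (C D : ℂ → ℂ)
    (hC : ∀ z, C z = (((μ : ℂ) ^ 2 - 1) / (4 * (μ : ℂ))) * z ^ (((-1 - (μ : ℂ)) / 2) : ℂ) * f₁ z)
    (hD : ∀ z, D z = (((1 + (μ : ℂ)) ^ 2) / (4 * (μ : ℂ))) * z ^ ((((μ : ℂ) - 1) / 2) : ℂ) * g₁ z) :
    Filter.Tendsto
      (fun z : ℂ => (z ^ 2 * (D z * deriv C z - C z * deriv D z) + (μ : ℂ) * K) / z)
      (nhdsWithin 0 Complex.slitPlane)
      (nhds ((1 - (μ : ℂ) ^ 2) * Z / 2)) :=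
  stmt10_general μ hμ r hr f₁ g₁ hf₁ hg₁ hf₁0 hg₁0 hg₁' Z K hZ hK C D hC hD
end

section
/- Let μ ≥ 2 be an integer, let b, c ∈ ℂ with b ≠ 0 and c ≠ 0, let r > 0, and let f₁, f₂, g₁, g₂ be holomorphic on the ball B(0, r) ⊆ ℂ with f₁(0) = f₂(0) = g₁(0) = g₂(0) = 1. Define A(z) = f₂(z), B(z) = b·z^{2μ−1}·g₂(z), C(z) = c·z^{−1}·f₁(z), D(z) = g₁(z), and h(z) = z²·(A(z)·C′(z) − C(z)·A′(z)). Suppose A(z)·D(z) − B(z)·C(z) = 1 for all z ∈ B(0, r) with z ≠ 0. Then the residue at 0 of the one-form D dC − C dD equals −h′(0), where h is extended holomorphically to 0. -/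
open Complex

/-! Write `C = F / z` with `F = c f₁`. The identity `D C' − C D' = (D C)' − 2 C D'` shows that
`D dC − C dD` differs from an exact form by `−2 F D' dz / z`, so its residue is `−2 F(0) D'(0)`.
Similarly `h = z² (A C' − C A') = z (A F' − F A') − A F`, whence `h'(0) = −2 F(0) A'(0)`.
Finally `B C = O(z^(2μ−2))` with `2μ − 2 ≥ 2`, so differentiating `A D − B C = 1` at `0` gives
`A'(0) + D'(0) = 0`. -/

open Real Set Filter Topology Metric

section

variable {𝕜 : Type*} [NontriviallyNormedField 𝕜]

noncomputable def wronskian (u v : 𝕜 → 𝕜) (z : 𝕜) : 𝕜 :=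
  u z * deriv v z - v z * deriv u z

theorem wronskian_eq_deriv_mul_sub {u v : 𝕜 → 𝕜} {z : 𝕜} (hu : DifferentiableAt 𝕜 u z)
    (hv : DifferentiableAt 𝕜 v z) :
    wronskian u v z = deriv (fun w => u w * v w) z - 2 * (v z * deriv u z) := by
  rw [wronskian, deriv_fun_mul hu hv]
  ring

theorem deriv_inv_mul {F : 𝕜 → 𝕜} {z : 𝕜} (hF : DifferentiableAt 𝕜 F z) (hz : z ≠ 0) :
    deriv (fun w => w⁻¹ * F w) z = z⁻¹ * deriv F z - (z ^ 2)⁻¹ * F z := by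
  rw [((hasDerivAt_inv hz).fun_mul hF.hasDerivAt).deriv]
  ring

theorem hasDerivAt_pow_mul_zero {ψ : 𝕜 → 𝕜} {n : ℕ} (hn : 2 ≤ n) (hψ : DifferentiableAt 𝕜 ψ 0) :
    HasDerivAt (fun z => z ^ n * ψ z) 0 0 := by
  refine ((hasDerivAt_pow n (0 : 𝕜)).fun_mul hψ.hasDerivAt).congr_deriv ?_
  simp [zero_pow (by omega : n - 1 ≠ 0), zero_pow (by omega : n ≠ 0)]

theorem deriv_add_deriv_eq_zero_of_mul_eq_one_add_pow_mul {f g ψ : 𝕜 → 𝕜} {n : ℕ} (hn : 2 ≤ n)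
    (hf : DifferentiableAt 𝕜 f 0) (hg : DifferentiableAt 𝕜 g 0) (hψ : DifferentiableAt 𝕜 ψ 0)
    (hf0 : f 0 = 1) (hg0 : g 0 = 1) (hfg : ∀ᶠ z in 𝓝[≠] 0, f z * g z = 1 + z ^ n * ψ z) :
    deriv f 0 + deriv g 0 = 0 := by
  have hfg' : (fun z => f z * g z) =ᶠ[𝓝 0] fun z => 1 + z ^ n * ψ z :=
    ((hf.mul hg).continuousAt.eventuallyEq_nhds_iff_eventuallyEq_nhdsNE
      (continuousAt_const.add ((continuousAt_id.pow n).mul hψ.continuousAt))).1 hfg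
  have hprod := hf.hasDerivAt.mul hg.hasDerivAt
  rw [hf0, hg0] at hprod
  have := hprod.unique (((hasDerivAt_pow_mul_zero hn hψ).const_add 1).congr_of_eventuallyEq hfg')
  linear_combination this

theorem hasDerivAt_of_eq_sq_mul_wronskian_inv_mul [CompleteSpace 𝕜] {A F H : 𝕜 → 𝕜}
    (hA : AnalyticAt 𝕜 A 0) (hF : AnalyticAt 𝕜 F 0) (hH : ContinuousAt H 0)
    (hHW : ∀ᶠ z in 𝓝[≠] 0, H z = z ^ 2 * wronskian A (fun w => w⁻¹ * F w) z) :
    HasDerivAt H (-2 * F 0 * deriv A 0) 0 := by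
  set K : 𝕜 → 𝕜 := fun z => z * wronskian A F z - A z * F z
  have hW : HasDerivAt (wronskian A F) (deriv (wronskian A F) 0) 0 :=
    ((hA.mul hF.deriv).sub (hF.mul hA.deriv)).differentiableAt.hasDerivAt
  have hK : HasDerivAt K (-2 * F 0 * deriv A 0) 0 := by
    refine (((hasDerivAt_id' (0 : 𝕜)).fun_mul hW).fun_sub
      (hA.differentiableAt.hasDerivAt.fun_mul hF.differentiableAt.hasDerivAt)).congr_deriv ?_
    simp only [wronskian]
    ring
  have hHK : H =ᶠ[𝓝[≠] 0] K := by
    filter_upwards [hHW, self_mem_nhdsWithin,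
      nhdsWithin_le_nhds (hA.eventually_analyticAt.and hF.eventually_analyticAt)]
      with z hHz (hz0 : z ≠ 0) hAFz
    rw [hHz, wronskian, deriv_inv_mul hAFz.2.differentiableAt hz0]
    simp only [K, wronskian]
    field_simp
    ring
  exact hK.congr_of_eventuallyEq
    ((hH.eventuallyEq_nhds_iff_eventuallyEq_nhdsNE hK.continuousAt).1 hHK)

end

theorem circleIntegral_wronskian_inv_mul {U : Set ℂ} {G F : ℂ → ℂ} {R : ℝ} (hR : 0 < R)
    (hU : IsOpen U) (hRU : closedBall (0 : ℂ) R ⊆ U)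
    (hG : DifferentiableOn ℂ G U) (hF : DifferentiableOn ℂ F U) :
    (∮ z in C(0, R), wronskian G (fun w => w⁻¹ * F w) z) =
      2 * π * I * (-2 * F 0 * deriv G 0) := by
  set V : ℂ → ℂ := fun w => w⁻¹ * F w
  have hU₀ : IsOpen (U \ {0}) := hU.sdiff isClosed_singleton
  have hsphere : sphere (0 : ℂ) R ⊆ U \ {0} := fun z hz =>
    ⟨hRU (sphere_subset_closedBall hz), ne_of_mem_sphere hz hR.ne'⟩
  have hV : DifferentiableOn ℂ V (U \ {0}) :=
    (differentiableOn_id.inv fun z hz => hz.2).fun_mul (hF.mono sdiff_subset)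
  have hGV : DifferentiableOn ℂ (fun w => G w * V w) (U \ {0}) :=
    (hG.mono sdiff_subset).fun_mul hV
  have hψ : DifferentiableOn ℂ (fun z => 2 * F z * deriv G z) U :=
    (hF.const_mul 2).fun_mul (hG.analyticOnNhd hU).deriv.differentiableOn
  have hsplit : EqOn (wronskian G V)
      (fun z => deriv (fun w => G w * V w) z - (z - 0)⁻¹ • (2 * F z * deriv G z))
      (sphere 0 R) := by
    intro z hz
    rw [wronskian_eq_deriv_mul_sub (hG.differentiableAt (hU.mem_nhds (hsphere hz).1))
      (hV.differentiableAt (hU₀.mem_nhds (hsphere hz)))]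
    simp only [V, smul_eq_mul, sub_zero]
    ring
  rw [circleIntegral.integral_congr hR.le hsplit, circleIntegral.integral_sub,
    circleIntegral.integral_eq_zero_of_hasDerivWithinAt hR.le,
    (hψ.mono hRU).circleIntegral_sub_inv_smul (mem_ball_self hR)]
  · simp only [smul_eq_mul]
    ring
  · exact fun z hz =>
      (hGV.differentiableAt (hU₀.mem_nhds (hsphere hz))).hasDerivAt.hasDerivWithinAt
  · exact ((hGV.analyticOnNhd hU₀).deriv.continuousOn.mono hsphere).circleIntegrable hR.le
  · have hinv : ContinuousOn (fun z : ℂ => (z - 0)⁻¹) (sphere 0 R) :=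
      (continuousOn_id.sub continuousOn_const).inv₀ fun z hz => sub_ne_zero.2 (hsphere hz).2
    exact (hinv.fun_smul (hψ.continuousOn.mono (hsphere.trans sdiff_subset))).circleIntegrable hR.le

theorem stmt15_general (μ : ℕ) (hμ : 2 ≤ μ) (b c : ℂ)
    (r : ℝ) (f₁ f₂ g₁ g₂ : ℂ → ℂ)
    (hf₁ : DifferentiableOn ℂ f₁ (Metric.ball 0 r))
    (hf₂ : DifferentiableOn ℂ f₂ (Metric.ball 0 r))
    (hg₁ : DifferentiableOn ℂ g₁ (Metric.ball 0 r))
    (hg₂ : DifferentiableOn ℂ g₂ (Metric.ball 0 r))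
    (hf₂0 : f₂ 0 = 1) (hg₁0 : g₁ 0 = 1)
    (A B C D : ℂ → ℂ)
    (hA : ∀ z, A z = f₂ z)
    (hB : ∀ z, B z = b * z ^ (2 * μ - 1) * g₂ z)
    (hC : ∀ z, C z = c * z⁻¹ * f₁ z)
    (hD : ∀ z, D z = g₁ z)
    (hdet : ∀ z ∈ Metric.ball (0 : ℂ) r, z ≠ 0 → A z * D z - B z * C z = 1)
    (H : ℂ → ℂ)
    (hHdiff : DifferentiableOn ℂ H (Metric.ball 0 r))
    (hH : ∀ z ∈ Metric.ball (0 : ℂ) r, z ≠ 0 →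
      H z = z ^ 2 * (A z * deriv C z - C z * deriv A z)) :
    ∀ R : ℝ, 0 < R → R < r →
      (∮ z in C(0, R), (D z * deriv C z - C z * deriv D z)) =
        2 * Real.pi * Complex.I * (-(deriv H 0)) := by
  intro R hR hRr
  have hball : ball (0 : ℂ) r ∈ 𝓝 0 := ball_mem_nhds 0 (hR.trans hRr)
  have hCF : C = fun w => w⁻¹ * (c * f₁ w) := funext fun w => by rw [hC]; ring
  have htrace : deriv f₂ 0 + deriv g₁ 0 = 0 := by
    refine deriv_add_deriv_eq_zero_of_mul_eq_one_add_pow_mul (n := 2 * μ - 2) (by omega)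
      (hf₂.differentiableAt hball) (hg₁.differentiableAt hball)
      (((hg₂.fun_mul hf₁).differentiableAt hball).const_mul (b * c)) hf₂0 hg₁0 ?_
    filter_upwards [nhdsWithin_le_nhds hball, self_mem_nhdsWithin] with z hz hz0
    have hdetz := hdet z hz hz0
    rw [hA, hB, hC, hD, show 2 * μ - 1 = 2 * μ - 2 + 1 by omega, pow_succ] at hdetz
    linear_combination hdetz + b * c * z ^ (2 * μ - 2) * g₂ z * f₁ z * mul_inv_cancel₀ hz0
  have hHderiv : HasDerivAt H (-2 * (c * f₁ 0) * deriv f₂ 0) 0 := by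
    refine hasDerivAt_of_eq_sq_mul_wronskian_inv_mul (A := f₂) (F := fun w => c * f₁ w)
      (hf₂.analyticAt hball) ((hf₁.const_mul c).analyticAt hball)
      (hHdiff.differentiableAt hball).continuousAt ?_
    filter_upwards [nhdsWithin_le_nhds hball, self_mem_nhdsWithin] with z hz hz0
    rw [hH z hz hz0, funext hA, hCF]
    rfl
  have hcirc : (∮ z in C(0, R), wronskian D C z) =
      2 * π * I * (-2 * (c * f₁ 0) * deriv g₁ 0) := by
    rw [funext hD, hCF]
    exact circleIntegral_wronskian_inv_mul hR isOpen_ball (closedBall_subset_ball hRr) hg₁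
      (hf₁.const_mul c)
  change (∮ z in C(0, R), wronskian D C z) = _
  rw [hcirc, hHderiv.deriv]
  linear_combination (-4 * π * I * c * f₁ 0) * htrace

/-- For the canonical Bryant representation of a canonical horospherical end,
with `h(z) = z²(A C′ − C A′)` extended holomorphically to `0`, the residue at `0`
of the one-form `D dC − C dD` equals `−h′(0)` (this expresses `φ₀ = −4π h′(0)`). -/
theorem stmt15 (μ : ℕ) (hμ : 2 ≤ μ) (b c : ℂ) (hb : b ≠ 0) (hc : c ≠ 0)
    (r : ℝ) (hr : 0 < r) (f₁ f₂ g₁ g₂ : ℂ → ℂ)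
    (hf₁ : DifferentiableOn ℂ f₁ (Metric.ball 0 r))
    (hf₂ : DifferentiableOn ℂ f₂ (Metric.ball 0 r))
    (hg₁ : DifferentiableOn ℂ g₁ (Metric.ball 0 r))
    (hg₂ : DifferentiableOn ℂ g₂ (Metric.ball 0 r))
    (hf₁0 : f₁ 0 = 1) (hf₂0 : f₂ 0 = 1) (hg₁0 : g₁ 0 = 1) (hg₂0 : g₂ 0 = 1)
    (A B C D : ℂ → ℂ)
    (hA : ∀ z, A z = f₂ z)
    (hB : ∀ z, B z = b * z ^ (2 * μ - 1) * g₂ z)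
    (hC : ∀ z, C z = c * z⁻¹ * f₁ z)
    (hD : ∀ z, D z = g₁ z)
    (hdet : ∀ z ∈ Metric.ball (0 : ℂ) r, z ≠ 0 → A z * D z - B z * C z = 1)
    (H : ℂ → ℂ)
    (hHdiff : DifferentiableOn ℂ H (Metric.ball 0 r))
    (hH : ∀ z ∈ Metric.ball (0 : ℂ) r, z ≠ 0 →
      H z = z ^ 2 * (A z * deriv C z - C z * deriv A z)) :
    ∀ R : ℝ, 0 < R → R < r →
      (∮ z in C(0, R), (D z * deriv C z - C z * deriv D z)) =
        2 * Real.pi * Complex.I * (-(deriv H 0)) :=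
  stmt15_general μ hμ b c r f₁ f₂ g₁ g₂ hf₁ hf₂ hg₁ hg₂ hf₂0 hg₁0 A B C D hA hB hC hD hdet H hHdiff
    hH
end

section
/- Let μ be a real number with μ > 0 and μ ≠ 1, let r > 0, and let f₁, f₂, g₁, g₂ be holomorphic on the ball B(0, r) ⊆ ℂ with f₁(0) = f₂(0) = g₁(0) = g₂(0) = 1 and f₂′(0) = g₂′(0) = 0. Set k = (μ−1)/(μ+1) and Z = ((μ²−1)/(4μ))·f₁′(0). For z ∈ B(0, r), z ≠ 0, define ζ(z) = ((μ²−1)/(4μz))·(f₁(z)·conj(f₂(z)) + g₁(z)·conj(g₂(z))·|z|^{2μ})/(|f₂(z)|² + k²·|g₂(z)|²·|z|^{2μ}) and ζ̃(z) = ((μ²−1)/(4μz))·(1 + |z|^{2μ})/(1 + k²·|z|^{2μ}), where |z|^{2μ} denotes the real power (|z|²)^μ. Then ζ(z) − ζ̃(z) tends to Z as z tends to 0 (through nonzero values). -/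
/-!
Put `ρ = |z|^{2μ}`, `N = f₁ f̄₂ + g₁ ḡ₂ ρ`, `D = |f₂|² + k² |g₂|² ρ`, `P = 1 + ρ` and `Q = 1 + k² ρ`,
so that `ζ − ζ̃ = c/z · (N Q − P D)/(D Q)` with `c = (μ² − 1)/(4μ)`. Expanding,
`N Q − P D = f̄₂ (f₁ − f₂) + ρ (g₁ ḡ₂ − |f₂|²) + k² ρ (f₁ f̄₂ − |g₂|²) + k² ρ² ḡ₂ (g₁ − g₂)`.
The last three brackets vanish at `0` and are real-differentiable, hence `O(z)`, so after division
by `z` their terms tend to `0` because `ρ → 0`; the first term tends to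
`f₁'(0) − f₂'(0) = f₁'(0)`, while `D Q → 1`.
-/

open Complex ComplexConjugate Filter Topology Asymptotics

lemma tendsto_rpow_sq_norm_nhds_zero {E : Type*} [SeminormedAddCommGroup E] {μ : ℝ}
    (hμ : 0 < μ) : Tendsto (fun x : E => (‖x‖ ^ 2) ^ μ) (𝓝 0) (𝓝 0) := by
  have hcont : Continuous fun x : E => (‖x‖ ^ 2) ^ μ :=
    (continuous_norm.pow 2).rpow_const fun _ => Or.inr hμ.le
  simpa [Real.zero_rpow hμ.ne'] using hcont.tendsto 0

lemma tendsto_mul_div_nhds_zero_of_isBigO {α 𝕜 : Type*} [NormedField 𝕜] {l : Filter α}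
    {u h z : α → 𝕜} (hu : Tendsto u l (𝓝 0)) (hh : h =O[l] z) :
    Tendsto (fun x => u x * h x / z x) l (𝓝 0) := by
  have hu' : u =o[l] fun _ => (1 : 𝕜) := (isLittleO_one_iff 𝕜).mpr hu
  simpa using (hu'.mul_isBigO hh).tendsto_div_nhds_zero

lemma tendsto_sub_div_nhdsNE_zero {𝕜 : Type*} [NontriviallyNormedField 𝕜] {f g : 𝕜 → 𝕜}
    {f' g' : 𝕜} (hf : HasDerivAt f f' 0) (hg : HasDerivAt g g' 0) (h0 : f 0 = g 0) :
    Tendsto (fun z => (f z - g z) / z) (𝓝[≠] 0) (𝓝 (f' - g')) := by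
  refine (hf.sub hg).tendsto_slope_zero.congr fun z => ?_
  simp [h0, div_eq_inv_mul]

lemma div_mul_div_sub_div_mul_div_eq {K : Type*} [Field K] (a b z N D P Q : K) (hD : D ≠ 0)
    (hQ : Q ≠ 0) :
    a / (b * z) * N / D - a / (b * z) * P / Q = a / b * ((N * Q - P * D) / z) / (D * Q) := by
  rw [div_sub_div _ _ hD hQ]
  ring

lemma catenoid_numerator_eq (a b c d ρ κ : ℂ) :
    (a * conj b + c * conj d * ρ) * (1 + κ * ρ) - (1 + ρ) * ((‖b‖ : ℂ) ^ 2 + κ * (‖d‖ : ℂ) ^ 2 * ρ)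
      = conj b * (a - b) + ρ * (c * conj d - b * conj b) + κ * ρ * (a * conj b - d * conj d)
        + κ * ρ ^ 2 * (conj d * (c - d)) := by
  rw [← mul_conj', ← mul_conj']
  ring

lemma tendsto_catenoid_numerator_div {f₁ f₂ g₁ g₂ ρ : ℂ → ℂ} (κ : ℂ)
    (hf₁ : DifferentiableAt ℂ f₁ 0) (hf₂ : DifferentiableAt ℂ f₂ 0)
    (hg₁ : DifferentiableAt ℂ g₁ 0) (hg₂ : DifferentiableAt ℂ g₂ 0)
    (hf₁0 : f₁ 0 = 1) (hf₂0 : f₂ 0 = 1) (hg₁0 : g₁ 0 = 1) (hg₂0 : g₂ 0 = 1)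
    (hf₂' : deriv f₂ 0 = 0) (hρ : Tendsto ρ (𝓝 0) (𝓝 0)) :
    Tendsto (fun z => ((f₁ z * conj (f₂ z) + g₁ z * conj (g₂ z) * ρ z) * (1 + κ * ρ z)
        - (1 + ρ z) * ((‖f₂ z‖ : ℂ) ^ 2 + κ * (‖g₂ z‖ : ℂ) ^ 2 * ρ z)) / z)
      (𝓝[≠] 0) (𝓝 (deriv f₁ 0)) := by
  have hρ' : Tendsto ρ (𝓝[≠] 0) (𝓝 0) := hρ.mono_left nhdsWithin_le_nhds
  have hconj {f : ℂ → ℂ} (hf : DifferentiableAt ℂ f 0) (hf0 : f 0 = 1) :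
      Tendsto (fun z => conj (f z)) (𝓝[≠] 0) (𝓝 1) := by
    simpa [hf0] using hf.continuousAt.tendsto.star.mono_left nhdsWithin_le_nhds
  have hbigO {φ : ℂ → ℂ} (hφ : DifferentiableAt ℝ φ 0) (hφ0 : φ 0 = 0) :
      φ =O[𝓝[≠] 0] fun z => z := by
    simpa [hφ0] using hφ.isBigO_sub.mono nhdsWithin_le_nhds
  have hf₁r := hf₁.restrictScalars ℝ
  have hf₂r := hf₂.restrictScalars ℝ
  have hg₁r := hg₁.restrictScalars ℝ
  have hg₂r := hg₂.restrictScalars ℝ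
  have hleading : Tendsto (fun z => conj (f₂ z) * ((f₁ z - f₂ z) / z)) (𝓝[≠] 0)
      (𝓝 (deriv f₁ 0)) := by
    simpa [hf₂'] using (hconj hf₂ hf₂0).mul
      (tendsto_sub_div_nhdsNE_zero hf₁.hasDerivAt hf₂.hasDerivAt (hf₁0.trans hf₂0.symm))
  have hsecond : Tendsto (fun z => ρ z * (g₁ z * conj (g₂ z) - f₂ z * conj (f₂ z)) / z)
      (𝓝[≠] 0) (𝓝 0) :=
    tendsto_mul_div_nhds_zero_of_isBigO hρ' (hbigO (by fun_prop) (by simp [hg₁0, hg₂0, hf₂0]))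
  have hthird : Tendsto (fun z => ρ z * (f₁ z * conj (f₂ z) - g₂ z * conj (g₂ z)) / z)
      (𝓝[≠] 0) (𝓝 0) :=
    tendsto_mul_div_nhds_zero_of_isBigO hρ' (hbigO (by fun_prop) (by simp [hf₁0, hf₂0, hg₂0]))
  have hfourth : Tendsto (fun z => κ * ρ z ^ 2 * (conj (g₂ z) * ((g₁ z - g₂ z) / z)))
      (𝓝[≠] 0) (𝓝 0) := by
    simpa using ((hρ'.pow 2).const_mul κ).mul ((hconj hg₂ hg₂0).mul
      (tendsto_sub_div_nhdsNE_zero hg₁.hasDerivAt hg₂.hasDerivAt (hg₁0.trans hg₂0.symm)))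
  convert ((hleading.add hsecond).add (hthird.const_mul κ)).add hfourth using 2 with z
  · rw [catenoid_numerator_eq]
    ring
  · simp

lemma tendsto_catenoid_denominator {f g ρ : ℂ → ℂ} (κ : ℂ) (hf : ContinuousAt f 0)
    (hg : ContinuousAt g 0) (hf0 : f 0 = 1) (hg0 : g 0 = 1) (hρ : Tendsto ρ (𝓝 0) (𝓝 0)) :
    Tendsto (fun z => ((‖f z‖ : ℂ) ^ 2 + κ * (‖g z‖ : ℂ) ^ 2 * ρ z) * (1 + κ * ρ z))
      (𝓝 0) (𝓝 1) := by
  have hnorm {φ : ℂ → ℂ} (hφ : ContinuousAt φ 0) (hφ0 : φ 0 = 1) :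
      Tendsto (fun z => (‖φ z‖ : ℂ)) (𝓝 0) (𝓝 1) := by
    simpa [hφ0] using hφ.tendsto.norm.ofReal
  simpa using (((hnorm hf hf0).pow 2).add (((hnorm hg hg0).pow 2).const_mul κ |>.mul hρ)).mul
    (hρ.const_mul κ |>.const_add 1)

theorem stmt16_general (μ : ℝ) (hμ : 0 < μ) (r : ℝ) (hr : 0 < r)
    (f₁ f₂ g₁ g₂ : ℂ → ℂ)
    (hf₁ : DifferentiableOn ℂ f₁ (Metric.ball 0 r))
    (hf₂ : DifferentiableOn ℂ f₂ (Metric.ball 0 r))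
    (hg₁ : DifferentiableOn ℂ g₁ (Metric.ball 0 r))
    (hg₂ : DifferentiableOn ℂ g₂ (Metric.ball 0 r))
    (hf₁0 : f₁ 0 = 1) (hf₂0 : f₂ 0 = 1) (hg₁0 : g₁ 0 = 1) (hg₂0 : g₂ 0 = 1)
    (hf₂' : deriv f₂ 0 = 0)
    (k : ℝ)
    (Z : ℂ) (hZ : Z = (((μ : ℂ) ^ 2 - 1) / (4 * (μ : ℂ))) * deriv f₁ 0)
    (ζ ζt : ℂ → ℂ)
    (hζ : ∀ z : ℂ, z ≠ 0 → ζ z =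
      (((μ : ℂ) ^ 2 - 1) / (4 * (μ : ℂ) * z)) *
        (f₁ z * (starRingEnd ℂ) (f₂ z) +
          g₁ z * (starRingEnd ℂ) (g₂ z) * (((‖z‖ ^ 2) ^ μ : ℝ) : ℂ)) /
        (((‖f₂ z‖) ^ 2 +
          k ^ 2 * (‖g₂ z‖) ^ 2 * (‖z‖ ^ 2) ^ μ : ℝ) : ℂ))
    (hζt : ∀ z : ℂ, z ≠ 0 → ζt z =
      (((μ : ℂ) ^ 2 - 1) / (4 * (μ : ℂ) * z)) *
        (((1 + (‖z‖ ^ 2) ^ μ : ℝ)) : ℂ) /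
        (((1 + k ^ 2 * (‖z‖ ^ 2) ^ μ : ℝ)) : ℂ)) :
    Filter.Tendsto (fun z : ℂ => ζ z - ζt z) (nhdsWithin 0 {(0 : ℂ)}ᶜ) (nhds Z) := by
  have hball : Metric.ball (0 : ℂ) r ∈ 𝓝 0 := Metric.ball_mem_nhds 0 hr
  have hρ : Tendsto (fun z : ℂ => (((‖z‖ ^ 2) ^ μ : ℝ) : ℂ)) (𝓝 0) (𝓝 0) := by
    simpa using (tendsto_rpow_sq_norm_nhds_zero hμ).ofReal
  have hf₂d := hf₂.differentiableAt hball
  have hg₂d := hg₂.differentiableAt hball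
  have hnum := tendsto_catenoid_numerator_div ((k : ℂ) ^ 2) (hf₁.differentiableAt hball) hf₂d
    (hg₁.differentiableAt hball) hg₂d hf₁0 hf₂0 hg₁0 hg₂0 hf₂' hρ
  have hden := tendsto_catenoid_denominator ((k : ℂ) ^ 2) hf₂d.continuousAt hg₂d.continuousAt
    hf₂0 hg₂0 hρ
  rw [hZ, ← div_one (_ * deriv f₁ 0)]
  refine ((hnum.const_mul _).div (hden.mono_left nhdsWithin_le_nhds) one_ne_zero).congr' ?_
  filter_upwards [self_mem_nhdsWithin,
    nhdsWithin_le_nhds (hden.eventually_ne one_ne_zero)] with z hz hDQ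
  obtain ⟨hD, hQ⟩ := mul_ne_zero_iff.mp hDQ
  rw [hζ z hz, hζt z hz]
  push_cast
  rw [div_mul_div_sub_div_mul_div_eq _ _ _ _ _ _ _ hD hQ, Pi.div_apply]

/-- Key step of Proposition (description): the horizontal coordinate `ζ` of a
canonical catenoidal end of growth `1 − μ` and axis `(Z, ∞)` differs from the
horizontal coordinate `ζ̃` of the catenoid cousin of axis `(0, ∞)` by `Z + o(1)`:
`ζ(z) − ζ̃(z) → Z` as `z → 0`, `z ≠ 0`. -/
theorem stmt16 (μ : ℝ) (hμ : 0 < μ) (hμ1 : μ ≠ 1) (r : ℝ) (hr : 0 < r)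
    (f₁ f₂ g₁ g₂ : ℂ → ℂ)
    (hf₁ : DifferentiableOn ℂ f₁ (Metric.ball 0 r))
    (hf₂ : DifferentiableOn ℂ f₂ (Metric.ball 0 r))
    (hg₁ : DifferentiableOn ℂ g₁ (Metric.ball 0 r))
    (hg₂ : DifferentiableOn ℂ g₂ (Metric.ball 0 r))
    (hf₁0 : f₁ 0 = 1) (hf₂0 : f₂ 0 = 1) (hg₁0 : g₁ 0 = 1) (hg₂0 : g₂ 0 = 1)
    (hf₂' : deriv f₂ 0 = 0) (hg₂' : deriv g₂ 0 = 0)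
    (k : ℝ) (hk : k = (μ - 1) / (μ + 1))
    (Z : ℂ) (hZ : Z = (((μ : ℂ) ^ 2 - 1) / (4 * (μ : ℂ))) * deriv f₁ 0)
    (ζ ζt : ℂ → ℂ)
    (hζ : ∀ z : ℂ, z ≠ 0 → ζ z =
      (((μ : ℂ) ^ 2 - 1) / (4 * (μ : ℂ) * z)) *
        (f₁ z * (starRingEnd ℂ) (f₂ z) +
          g₁ z * (starRingEnd ℂ) (g₂ z) * (((‖z‖ ^ 2) ^ μ : ℝ) : ℂ)) /
        (((‖f₂ z‖) ^ 2 +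
          k ^ 2 * (‖g₂ z‖) ^ 2 * (‖z‖ ^ 2) ^ μ : ℝ) : ℂ))
    (hζt : ∀ z : ℂ, z ≠ 0 → ζt z =
      (((μ : ℂ) ^ 2 - 1) / (4 * (μ : ℂ) * z)) *
        (((1 + (‖z‖ ^ 2) ^ μ : ℝ)) : ℂ) /
        (((1 + k ^ 2 * (‖z‖ ^ 2) ^ μ : ℝ)) : ℂ)) :
    Filter.Tendsto (fun z : ℂ => ζ z - ζt z) (nhdsWithin 0 {(0 : ℂ)}ᶜ) (nhds Z) :=
  stmt16_general μ hμ r hr f₁ f₂ g₁ g₂ hf₁ hf₂ hg₁ hg₂ hf₁0 hf₂0 hg₁0 hg₂0 hf₂' k Z hZ ζ ζt hζ hζt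
end

section
/- Let μ₁, μ₂ be real numbers with μ₁ > 0, μ₂ > 0, μ₁ ≠ 1, μ₂ ≠ 1. Let A₁, A₂, B₁, B₂ ∈ ℂ with A₁ ≠ B₁, A₂ ≠ B₂ and B₁ ≠ B₂. Suppose that for every X ∈ ℂ, (1 − μ₁²)·(X − A₁)·(X − B₁)/(B₁ − A₁) + (1 − μ₂²)·(X − A₂)·(X − B₂)/(B₂ − A₂) = 0. Then μ₁ = μ₂, A₁ = B₂ and A₂ = B₁. -/
open Complex

/-- Proposition (deux), algebraic content: if the flux polynomials of two
catenoidal ends with distinct asymptotic boundaries sum to zero, then the two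
ends have the same growth and the same axis with exchanged endpoints. -/
theorem stmt17 (μ₁ μ₂ : ℝ) (hμ₁ : 0 < μ₁) (hμ₂ : 0 < μ₂) (hμ₁1 : μ₁ ≠ 1) (hμ₂1 : μ₂ ≠ 1)
    (A₁ A₂ B₁ B₂ : ℂ) (hAB₁ : A₁ ≠ B₁) (hAB₂ : A₂ ≠ B₂) (hB : B₁ ≠ B₂)
    (hbal : ∀ X : ℂ,
      ((1 - μ₁ ^ 2 : ℝ) : ℂ) * (X - A₁) * (X - B₁) / (B₁ - A₁) +
      ((1 - μ₂ ^ 2 : ℝ) : ℂ) * (X - A₂) * (X - B₂) / (B₂ - A₂) = 0) :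
    μ₁ = μ₂ ∧ A₁ = B₂ ∧ A₂ = B₁ := by
  have hd₁ : B₁ - A₁ ≠ 0 := sub_ne_zero.mpr (Ne.symm hAB₁)
  have hd₂ : B₂ - A₂ ≠ 0 := sub_ne_zero.mpr (Ne.symm hAB₂)
  have hk : ∀ μ : ℝ, 0 < μ → μ ≠ 1 → ((1 - μ ^ 2 : ℝ) : ℂ) ≠ 0 := by
    intro μ hμ hμ1
    simp only [ne_eq, Complex.ofReal_eq_zero]
    intro h
    have h2 : (μ - 1) * (μ + 1) = 0 := by nlinarith
    rcases mul_eq_zero.mp h2 with h3 | h3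
    · exact hμ1 (by linarith)
    · linarith
  have hk₁ := hk μ₁ hμ₁ hμ₁1
  have hk₂ := hk μ₂ hμ₂ hμ₂1
  have hbal' : ∀ X : ℂ,
      ((1 - μ₁ ^ 2 : ℝ) : ℂ) * (X - A₁) * (X - B₁) * (B₂ - A₂) +
      ((1 - μ₂ ^ 2 : ℝ) : ℂ) * (X - A₂) * (X - B₂) * (B₁ - A₁) = 0 := by
    intro X
    have h := hbal X
    field_simp at h
    push_cast at h ⊢
    linear_combination h
  -- evaluate at X = B₁ : get A₂ = B₁
  have hA₂ : A₂ = B₁ := by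
    have h : ((1 - μ₂ ^ 2 : ℝ) : ℂ) * (B₁ - A₂) * (B₁ - B₂) * (B₁ - A₁) = 0 := by
      linear_combination hbal' B₁
    have h1 : B₁ - A₂ = 0 := by
      by_contra hc
      exact (mul_ne_zero (mul_ne_zero (mul_ne_zero hk₂ hc) (sub_ne_zero.mpr hB)) hd₁) h
    exact (sub_eq_zero.mp h1).symm
  -- evaluate at X = B₂ : get A₁ = B₂
  have hA₁ : A₁ = B₂ := by
    have h : ((1 - μ₁ ^ 2 : ℝ) : ℂ) * (B₂ - A₁) * (B₂ - B₁) * (B₂ - A₂) = 0 := by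
      linear_combination hbal' B₂
    have h1 : B₂ - A₁ = 0 := by
      by_contra hc
      exact (mul_ne_zero (mul_ne_zero (mul_ne_zero hk₁ hc)
        (sub_ne_zero.mpr hB.symm)) hd₂) h
    exact (sub_eq_zero.mp h1).symm
  rw [hA₁, hA₂] at hbal'
  -- pick a point where (X - B₂)(X - B₁) ≠ 0 to get equal growths
  have key : ∀ X : ℂ, X - B₂ ≠ 0 → X - B₁ ≠ 0 → μ₁ = μ₂ := by
    intro X hX₂ hX₁
    have h : (((1 - μ₁ ^ 2 : ℝ) : ℂ) - ((1 - μ₂ ^ 2 : ℝ) : ℂ)) *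
        ((X - B₂) * ((X - B₁) * (B₂ - B₁))) = 0 := by
      linear_combination hbal' X
    have hkk : ((1 - μ₁ ^ 2 : ℝ) : ℂ) - ((1 - μ₂ ^ 2 : ℝ) : ℂ) = 0 := by
      rcases mul_eq_zero.mp h with h' | h'
      · exact h'
      · exact absurd h' (mul_ne_zero hX₂ (mul_ne_zero hX₁ (sub_ne_zero.mpr hB.symm)))
    have hr : (1 - μ₁ ^ 2 : ℝ) = (1 - μ₂ ^ 2 : ℝ) := by
      exact_mod_cast sub_eq_zero.mp hkk
    have h2 : (μ₁ - μ₂) * (μ₁ + μ₂) = 0 := by nlinarith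
    rcases mul_eq_zero.mp h2 with h3 | h3
    · linarith
    · linarith
  have hμ : μ₁ = μ₂ := by
    by_cases hc : B₂ + 1 = B₁
    · refine key (B₂ + 2) (by intro h; simpa using sub_eq_zero.mp h) ?_
      rw [← hc]
      intro h
      have := sub_eq_zero.mp h
      have : (2 : ℂ) = 1 := by linear_combination this
      norm_num at this
    · refine key (B₂ + 1) (by intro h; simpa using sub_eq_zero.mp h)
        (by intro h; exact hc (by linear_combination h))
  exact ⟨hμ, hA₁, hA₂⟩
end

section
/- Let σ₁, σ₂, σ₃ be nonzero real numbers and let A₁, A₂, A₃ be real numbers with A₁ ≠ −1, A₂ ≠ 0, A₃ ≠ 1. Suppose that for every X ∈ ℝ, σ₁·(X − A₁)·(X + 1)/(−1 − A₁) + σ₂·(X − A₂)·X/(−A₂) + σ₃·(X − A₃)·(X − 1)/(1 − A₃) = 0. Then σ₁ ≠ σ₃, 3σ₁ + σ₂ − σ₃ ≠ 0, σ₁ − σ₂ − 3σ₃ ≠ 0, and A₁ = (σ₁ − σ₂ + σ₃)/(3σ₁ + σ₂ − σ₃), A₂ = σ₂/(σ₃ − σ₁), A₃ = (σ₁ − σ₂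 + σ₃)/(σ₁ − σ₂ − 3σ₃); moreover A₁·(1 − A₂ + A₃) = A₃·(1 − A₁ + A₂). -/
/-!
Write the three flux polynomials as `a (X - A₁)(X + 1)`, `b (X - A₂) X`, `c (X - A₃)(X - 1)`, so
that `σ₁ = a (-1 - A₁)`, `σ₂ = -b A₂`, `σ₃ = c (1 - A₃)`. Evaluating their vanishing sum at
`X = -1, 0, 1` gives `a + b + c = 0`, `a (1 - A₁) - b A₂ - c (1 + A₃) = 0` and `a A₁ = c A₃`.
In these terms `σ₃ - σ₁ = -b`, `3σ₁ + σ₂ - σ₃ = -4a`, `σ₁ - σ₂ - 3σ₃ = -4c` and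
`σ₁ - σ₂ + σ₃ = -4aA₁ = -4cA₃`, from which the axes are read off; the concurrency of the three
geodesics is then a polynomial identity in `a, b, c` and the `Aⱼ`.
-/

variable {K : Type*} [Field K]

theorem neg_four_ne_zero [NeZero (2 : K)] : (-4 : K) ≠ 0 := by
  have h := mul_ne_zero (two_ne_zero (α := K)) two_ne_zero
  contrapose! h
  linear_combination -h

theorem coeffs_eq_zero_of_forall_eq_zero [NeZero (2 : K)] {a b c A₁ A₂ A₃ : K}
    (h : ∀ X, a * (X - A₁) * (X + 1) + b * (X - A₂) * X + c * (X - A₃) * (X - 1) = 0) :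
    a + b + c = 0 ∧ a * (1 - A₁) - b * A₂ - c * (1 + A₃) = 0 ∧ c * A₃ = a * A₁ := by
  refine ⟨mul_left_cancel₀ (two_ne_zero (α := K)) ?_,
    mul_left_cancel₀ (two_ne_zero (α := K)) ?_, by linear_combination h 0⟩
  · linear_combination h 1 + h (-1) - 2 * h 0
  · linear_combination h 1 - h (-1)

/-- `a, b, c` are the leading coefficients `σⱼ / (Bⱼ - Aⱼ)` of the flux polynomials of three ends
with growth data `σⱼ`, axes `(Aⱼ, Bⱼ)` and `B = (-1, 0, 1)`, and the coefficients of `X²`, `X`, `1`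
in the sum of these polynomials vanish. -/
structure FluxBalance (σ₁ σ₂ σ₃ A₁ A₂ A₃ a b c : K) : Prop where
  growth₁ : σ₁ = a * (-1 - A₁)
  growth₂ : σ₂ = b * -A₂
  growth₃ : σ₃ = c * (1 - A₃)
  coeff_two : a + b + c = 0
  coeff_one : a * (1 - A₁) - b * A₂ - c * (1 + A₃) = 0
  coeff_zero : c * A₃ = a * A₁

namespace FluxBalance

variable {σ₁ σ₂ σ₃ A₁ A₂ A₃ a b c : K}

theorem of_forall_eq_zero [NeZero (2 : K)] (hA₁ : A₁ ≠ -1) (hA₂ : A₂ ≠ 0) (hA₃ : A₃ ≠ 1)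
    (hbal : ∀ X : K,
      σ₁ * (X - A₁) * (X + 1) / (-1 - A₁) +
      σ₂ * (X - A₂) * X / (-A₂) +
      σ₃ * (X - A₃) * (X - 1) / (1 - A₃) = 0) :
    FluxBalance σ₁ σ₂ σ₃ A₁ A₂ A₃ (σ₁ / (-1 - A₁)) (σ₂ / -A₂) (σ₃ / (1 - A₃)) := by
  have hd₁ : -1 - A₁ ≠ 0 := fun h => hA₁ (by linear_combination -h)
  have hd₃ : 1 - A₃ ≠ 0 := sub_ne_zero.2 hA₃.symm
  obtain ⟨h₂, h₁, h₀⟩ := coeffs_eq_zero_of_forall_eq_zero fun X => by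
    simpa only [mul_div_right_comm] using hbal X
  exact ⟨(div_mul_cancel₀ σ₁ hd₁).symm, (div_mul_cancel₀ σ₂ (neg_ne_zero.2 hA₂)).symm,
    (div_mul_cancel₀ σ₃ hd₃).symm, h₂, h₁, h₀⟩

theorem growth₃_sub_growth₁ (h : FluxBalance σ₁ σ₂ σ₃ A₁ A₂ A₃ a b c) : σ₃ - σ₁ = -b := by
  rw [h.growth₁, h.growth₃]
  linear_combination h.coeff_two - h.coeff_zero

theorem axis_numerator_eq (h : FluxBalance σ₁ σ₂ σ₃ A₁ A₂ A₃ a b c) :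
    σ₁ - σ₂ + σ₃ = -4 * (a * A₁) := by
  rw [h.growth₁, h.growth₂, h.growth₃]
  linear_combination -h.coeff_one - 2 * h.coeff_zero

theorem axis₁_denominator_eq (h : FluxBalance σ₁ σ₂ σ₃ A₁ A₂ A₃ a b c) :
    3 * σ₁ + σ₂ - σ₃ = -4 * a := by
  rw [h.growth₁, h.growth₂, h.growth₃]
  linear_combination h.coeff_one + 2 * h.coeff_zero

theorem axis₃_denominator_eq (h : FluxBalance σ₁ σ₂ σ₃ A₁ A₂ A₃ a b c) :
    σ₁ - σ₂ - 3 * σ₃ = -4 * c := by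
  rw [h.growth₁, h.growth₂, h.growth₃]
  linear_combination -h.coeff_one + 2 * h.coeff_zero

theorem growth₁_ne_growth₃ (h : FluxBalance σ₁ σ₂ σ₃ A₁ A₂ A₃ a b c) (hσ₂ : σ₂ ≠ 0) :
    σ₁ ≠ σ₃ := by
  have hb : -b ≠ 0 := neg_ne_zero.2 (left_ne_zero_of_mul (h.growth₂ ▸ hσ₂))
  rw [← h.growth₃_sub_growth₁] at hb
  exact (sub_ne_zero.1 hb).symm

theorem axis₁_denominator_ne_zero [NeZero (2 : K)] (h : FluxBalance σ₁ σ₂ σ₃ A₁ A₂ A₃ a b c)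
    (hσ₁ : σ₁ ≠ 0) : 3 * σ₁ + σ₂ - σ₃ ≠ 0 := by
  rw [h.axis₁_denominator_eq]
  exact mul_ne_zero neg_four_ne_zero (left_ne_zero_of_mul (h.growth₁ ▸ hσ₁))

theorem axis₃_denominator_ne_zero [NeZero (2 : K)] (h : FluxBalance σ₁ σ₂ σ₃ A₁ A₂ A₃ a b c)
    (hσ₃ : σ₃ ≠ 0) : σ₁ - σ₂ - 3 * σ₃ ≠ 0 := by
  rw [h.axis₃_denominator_eq]
  exact mul_ne_zero neg_four_ne_zero (left_ne_zero_of_mul (h.growth₃ ▸ hσ₃))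

theorem axis₁_eq [NeZero (2 : K)] (h : FluxBalance σ₁ σ₂ σ₃ A₁ A₂ A₃ a b c) (hσ₁ : σ₁ ≠ 0) :
    A₁ = (σ₁ - σ₂ + σ₃) / (3 * σ₁ + σ₂ - σ₃) := by
  rw [eq_div_iff (h.axis₁_denominator_ne_zero hσ₁), h.axis_numerator_eq,
    h.axis₁_denominator_eq]
  ring

theorem axis₂_eq (h : FluxBalance σ₁ σ₂ σ₃ A₁ A₂ A₃ a b c) (hσ₂ : σ₂ ≠ 0) :
    A₂ = σ₂ / (σ₃ - σ₁) := by
  rw [eq_div_iff (sub_ne_zero.2 (h.growth₁_ne_growth₃ hσ₂).symm), h.growth₃_sub_growth₁,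
    h.growth₂]
  ring

theorem axis₃_eq [NeZero (2 : K)] (h : FluxBalance σ₁ σ₂ σ₃ A₁ A₂ A₃ a b c) (hσ₃ : σ₃ ≠ 0) :
    A₃ = (σ₁ - σ₂ + σ₃) / (σ₁ - σ₂ - 3 * σ₃) := by
  rw [eq_div_iff (h.axis₃_denominator_ne_zero hσ₃), h.axis_numerator_eq,
    h.axis₃_denominator_eq]
  linear_combination -4 * h.coeff_zero

theorem axes_concurrent (h : FluxBalance σ₁ σ₂ σ₃ A₁ A₂ A₃ a b c) (hσ₁ : σ₁ ≠ 0)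
    (hσ₃ : σ₃ ≠ 0) : A₁ * (1 - A₂ + A₃) = A₃ * (1 - A₁ + A₂) := by
  have ha : a ≠ 0 := left_ne_zero_of_mul (h.growth₁ ▸ hσ₁)
  have hc : c ≠ 0 := left_ne_zero_of_mul (h.growth₃ ▸ hσ₃)
  refine mul_left_cancel₀ (mul_ne_zero ha hc) ?_
  linear_combination (a * A₁ - a - a * A₂) * h.coeff_zero - a * A₁ * h.coeff_one
    - a * A₁ * A₂ * h.coeff_two

end FluxBalance

/-- Proposition (trois), algebraic content: if the flux polynomials of three
catenoidal ends with asymptotic boundaries `−1, 0, 1` sum to zero, then the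
axes are uniquely determined by the growths and the three geodesics
`(A₁, −1)`, `(A₂, 0)`, `(A₃, 1)` are concurrent. -/
theorem stmt18 (σ₁ σ₂ σ₃ : ℝ) (hσ₁ : σ₁ ≠ 0) (hσ₂ : σ₂ ≠ 0) (hσ₃ : σ₃ ≠ 0)
    (A₁ A₂ A₃ : ℝ) (hA₁ : A₁ ≠ -1) (hA₂ : A₂ ≠ 0) (hA₃ : A₃ ≠ 1)
    (hbal : ∀ X : ℝ,
      σ₁ * (X - A₁) * (X + 1) / (-1 - A₁) +
      σ₂ * (X - A₂) * X / (-A₂) +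
      σ₃ * (X - A₃) * (X - 1) / (1 - A₃) = 0) :
    σ₁ ≠ σ₃ ∧ 3 * σ₁ + σ₂ - σ₃ ≠ 0 ∧ σ₁ - σ₂ - 3 * σ₃ ≠ 0 ∧
    A₁ = (σ₁ - σ₂ + σ₃) / (3 * σ₁ + σ₂ - σ₃) ∧
    A₂ = σ₂ / (σ₃ - σ₁) ∧
    A₃ = (σ₁ - σ₂ + σ₃) / (σ₁ - σ₂ - 3 * σ₃) ∧
    A₁ * (1 - A₂ + A₃) = A₃ * (1 - A₁ + A₂) := by
  have h := FluxBalance.of_forall_eq_zero hA₁ hA₂ hA₃ hbal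
  exact ⟨h.growth₁_ne_growth₃ hσ₂, h.axis₁_denominator_ne_zero hσ₁,
    h.axis₃_denominator_ne_zero hσ₃, h.axis₁_eq hσ₁, h.axis₂_eq hσ₂, h.axis₃_eq hσ₃,
    h.axes_concurrent hσ₁ hσ₃⟩
end

section
/- Let F₁, F₂, F₃ be nonzero vectors in ℝ³ with F₁ + F₂ + F₃ = 0, and let P₁, P₂, P₃ be points of ℝ³ with P₁ × F₁ + P₂ × F₂ + P₃ × F₃ = 0 (where × denotes the cross product). Let Lⱼ = {Pⱼ + t·Fⱼ : t ∈ ℝ} be the line through Pⱼ with direction Fⱼ. Then there is an affine plane of ℝ³ containing L₁, L₂ and L₃; moreover, if F₁ and F₂ are linearly independent, then L₁, L₂ and L₃ have a common point, while if F₁ and F₂ are linearly dependent, then F₁, F₂, F₃ are pairwise linearly dependent (so the three lines are parallel). -/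
/-!
The torque of the `j`-th end about `Q` is `(Q - Pⱼ) × Fⱼ`; the two balancing hypotheses say
exactly that the three torques sum to zero about every point `Q`, and the axis `Lⱼ` is the zero
set of the `j`-th torque.

If `F₁, F₂` are independent, dotting the torque balance with `F₃ = -(F₁ + F₂)` shows that
`P₁ - P₂` is orthogonal to `F₁ × F₂`, so `L₁` and `L₂` are coplanar and meet at some `x`. Two of
the torques vanish at `x`, hence so does the third and `x ∈ L₃`; the plane through `x` normal to
`F₁ × F₂` then contains all three axes. Otherwise every `Fⱼ` is a multiple of `F₂`, and the torque
balance about `P₃` says that `P₁`, `P₂`, `P₃` are collinear modulo `F₂`, so any plane parallel to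
`F₂` and to `P₃ - P₁` through `P₃` contains the axes.
-/

open Matrix

namespace Balancing

section CommRing

variable {R : Type*} [CommRing R]

def line (P F : Fin 3 → R) : Set (Fin 3 → R) := {x | ∃ t : R, x = P + t • F}

def torque (P F Q : Fin 3 → R) : Fin 3 → R := (Q - P) ⨯₃ F

def LiesInPlane (S : Set (Fin 3 → R)) : Prop :=
  ∃ (n : Fin 3 → R) (d : R), n ≠ 0 ∧ ∀ x ∈ S, n ⬝ᵥ x = d

lemma torque_eq_zero_of_mem_line {P F x : Fin 3 → R} (hx : x ∈ line P F) : torque P F x = 0 := by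
  obtain ⟨t, rfl⟩ := hx
  simp [torque, cross_self]

lemma dotProduct_eq_of_mem_line {P F n x : Fin 3 → R} (hn : n ⬝ᵥ F = 0) (hx : x ∈ line P F) :
    n ⬝ᵥ x = n ⬝ᵥ P := by
  obtain ⟨t, rfl⟩ := hx
  simp [dotProduct_add, dotProduct_smul, hn]

/-- Cramer's rule in the basis `a, b, a × b`. -/
lemma smul_dotProduct_cross_self (a b v : Fin 3 → R) :
    (a ⨯₃ b ⬝ᵥ a ⨯₃ b) • v =
      (v ⬝ᵥ b ⨯₃ (a ⨯₃ b)) • a + (v ⬝ᵥ (a ⨯₃ b) ⨯₃ a) • b + (v ⬝ᵥ a ⨯₃ b) • a ⨯₃ b := by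
  ext i
  fin_cases i <;>
    simp only [cross_apply, vec3_dotProduct, Pi.add_apply, Pi.smul_apply, smul_eq_mul, cons_val,
      Fin.isValue, Fin.zero_eta, Fin.mk_one, Fin.reduceFinMk] <;> ring

variable {F₁ F₂ F₃ P₁ P₂ P₃ : Fin 3 → R}

lemma liesInPlane_union_line {n : Fin 3 → R} {d : R} (hn : n ≠ 0)
    (h₁ : n ⬝ᵥ F₁ = 0) (h₂ : n ⬝ᵥ F₂ = 0) (h₃ : n ⬝ᵥ F₃ = 0)
    (hP₁ : n ⬝ᵥ P₁ = d) (hP₂ : n ⬝ᵥ P₂ = d) (hP₃ : n ⬝ᵥ P₃ = d) :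
    LiesInPlane (line P₁ F₁ ∪ line P₂ F₂ ∪ line P₃ F₃) := by
  refine ⟨n, d, hn, ?_⟩
  rintro x ((hx | hx) | hx)
  · rw [dotProduct_eq_of_mem_line h₁ hx, hP₁]
  · rw [dotProduct_eq_of_mem_line h₂ hx, hP₂]
  · rw [dotProduct_eq_of_mem_line h₃ hx, hP₃]

lemma torque_add_torque_add_torque (hF : F₁ + F₂ + F₃ = 0)
    (hT : P₁ ⨯₃ F₁ + P₂ ⨯₃ F₂ + P₃ ⨯₃ F₃ = 0) (Q : Fin 3 → R) :
    torque P₁ F₁ Q + torque P₂ F₂ Q + torque P₃ F₃ Q = 0 := calc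
  _ = Q ⨯₃ (F₁ + F₂ + F₃) - (P₁ ⨯₃ F₁ + P₂ ⨯₃ F₂ + P₃ ⨯₃ F₃) := by
    simp only [torque, map_sub, map_add, LinearMap.sub_apply]; abel
  _ = 0 := by rw [hF, hT, map_zero, sub_zero]

lemma sub_dotProduct_cross_eq_zero (hF : F₁ + F₂ + F₃ = 0)
    (hT : P₁ ⨯₃ F₁ + P₂ ⨯₃ F₂ + P₃ ⨯₃ F₃ = 0) : (P₁ - P₂) ⬝ᵥ F₁ ⨯₃ F₂ = 0 := by
  have h := congrArg (F₃ ⬝ᵥ ·) (torque_add_torque_add_torque hF hT P₂)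
  simp only [torque, sub_self, map_zero, LinearMap.zero_apply, add_zero, dotProduct_add,
    dot_cross_self, dotProduct_zero] at h
  rwa [triple_product_permutation, eq_neg_of_add_eq_zero_right hF, map_neg, map_add, cross_self,
    zero_add, dotProduct_neg, neg_eq_zero, ← neg_sub, neg_dotProduct, neg_eq_zero] at h

end CommRing

section Field

variable {K : Type*} [Field K]

lemma exists_smul_eq_of_cross_eq_zero {v w : Fin 3 → K} (hv : v ≠ 0) (h : w ⨯₃ v = 0) :
    ∃ a : K, a • v = w := by
  by_contra! hw
  refine crossProduct_ne_zero_iff_linearIndependent.mpr ((LinearIndependent.pair_iff' hv).mpr hw) ?_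
  rw [← cross_anticomm, h, neg_zero]

lemma mem_line_of_torque_eq_zero {P F x : Fin 3 → K} (hF : F ≠ 0) (h : torque P F x = 0) :
    x ∈ line P F := by
  obtain ⟨t, ht⟩ := exists_smul_eq_of_cross_eq_zero hF h
  exact ⟨t, by rw [ht, add_sub_cancel]⟩

lemma exists_ne_zero_dotProduct_eq_zero (a b : Fin 3 → K) :
    ∃ n ≠ 0, n ⬝ᵥ a = 0 ∧ n ⬝ᵥ b = 0 := by
  obtain ⟨n, hn, h⟩ := exists_mulVec_eq_zero_iff.mpr (det_eq_zero_of_row_eq_zero (2 : Fin 3)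
    fun j => (rfl : (![a, b, 0] : Matrix (Fin 3) (Fin 3) K) 2 j = 0))
  exact ⟨n, hn, by rw [dotProduct_comm]; exact congrFun h 0,
    by rw [dotProduct_comm]; exact congrFun h 1⟩

variable {F₁ F₂ F₃ P₁ P₂ P₃ : Fin 3 → K}

lemma not_linearIndependent_of_balanced (hF : F₁ + F₂ + F₃ = 0)
    (h : ¬LinearIndependent K ![F₁, F₂]) :
    ¬LinearIndependent K ![F₁, F₃] ∧ ¬LinearIndependent K ![F₂, F₃] := by
  simp only [← crossProduct_ne_zero_iff_linearIndependent, not_not] at h ⊢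
  rw [eq_neg_of_add_eq_zero_right hF, map_neg, map_neg, map_add, map_add,
    ← cross_anticomm F₁ F₂, h]
  simp [cross_self]

lemma liesInPlane_of_not_linearIndependent (hF₂ : F₂ ≠ 0) (hF : F₁ + F₂ + F₃ = 0)
    (hT : P₁ ⨯₃ F₁ + P₂ ⨯₃ F₂ + P₃ ⨯₃ F₃ = 0) (h : ¬LinearIndependent K ![F₁, F₂]) :
    LiesInPlane (line P₁ F₁ ∪ line P₂ F₂ ∪ line P₃ F₃) := by
  have hT₃ := torque_add_torque_add_torque hF hT P₃
  rw [← crossProduct_ne_zero_iff_linearIndependent, not_not] at h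
  obtain ⟨a, rfl⟩ := exists_smul_eq_of_cross_eq_zero hF₂ h
  obtain rfl : F₃ = -(a • F₂ + F₂) := eq_neg_of_add_eq_zero_right hF
  have hP : (a • (P₃ - P₁) + (P₃ - P₂)) ⨯₃ F₂ = 0 := by
    simpa [torque, map_add, map_smul] using hT₃
  obtain ⟨s, hs⟩ := exists_smul_eq_of_cross_eq_zero hF₂ hP
  obtain ⟨n, hn, hnF, hnP₁⟩ := exists_ne_zero_dotProduct_eq_zero F₂ (P₃ - P₁)
  have hnP₂ := congrArg (n ⬝ᵥ ·) hs
  simp only [dotProduct_add, dotProduct_smul, dotProduct_sub, smul_eq_mul, hnF, mul_zero]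
    at hnP₁ hnP₂
  refine liesInPlane_union_line (d := n ⬝ᵥ P₃) hn ?_ hnF ?_ ?_ ?_ rfl
  · simp [dotProduct_smul, hnF]
  · simp [dotProduct_add, dotProduct_smul, hnF]
  · linear_combination -hnP₁
  · linear_combination hnP₂ + a * hnP₁

end Field

section LinearOrderedField

variable {K : Type*} [Field K] [LinearOrder K] [IsStrictOrderedRing K]

lemma exists_smul_add_smul_eq_of_dotProduct_cross_eq_zero {a b v : Fin 3 → K}
    (hab : a ⨯₃ b ≠ 0) (hv : v ⬝ᵥ a ⨯₃ b = 0) : ∃ α β : K, α • a + β • b = v := by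
  have hN : a ⨯₃ b ⬝ᵥ a ⨯₃ b ≠ 0 := mt dotProduct_self_eq_zero.mp hab
  have key := smul_dotProduct_cross_self a b v
  rw [hv, zero_smul, add_zero] at key
  refine ⟨(a ⨯₃ b ⬝ᵥ a ⨯₃ b)⁻¹ * (v ⬝ᵥ b ⨯₃ (a ⨯₃ b)),
    (a ⨯₃ b ⬝ᵥ a ⨯₃ b)⁻¹ * (v ⬝ᵥ (a ⨯₃ b) ⨯₃ a), ?_⟩
  rw [mul_smul, mul_smul, ← smul_add, ← key, smul_smul, inv_mul_cancel₀ hN, one_smul]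

variable {F₁ F₂ F₃ P₁ P₂ P₃ : Fin 3 → K}

lemma exists_mem_line_inter_line (h₁₂ : F₁ ⨯₃ F₂ ≠ 0) (hP : (P₁ - P₂) ⬝ᵥ F₁ ⨯₃ F₂ = 0) :
    ∃ x, x ∈ line P₁ F₁ ∧ x ∈ line P₂ F₂ := by
  obtain ⟨α, β, hαβ⟩ := exists_smul_add_smul_eq_of_dotProduct_cross_eq_zero h₁₂ hP
  exact ⟨P₂ + β • F₂, ⟨-α, by linear_combination (norm := module) hαβ⟩, β, rfl⟩

lemma exists_mem_lines_of_linearIndependent (hF₃ : F₃ ≠ 0) (hF : F₁ + F₂ + F₃ = 0)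
    (hT : P₁ ⨯₃ F₁ + P₂ ⨯₃ F₂ + P₃ ⨯₃ F₃ = 0) (hLI : LinearIndependent K ![F₁, F₂]) :
    ∃ x, x ∈ line P₁ F₁ ∧ x ∈ line P₂ F₂ ∧ x ∈ line P₃ F₃ := by
  obtain ⟨x, h₁, h₂⟩ := exists_mem_line_inter_line
    (crossProduct_ne_zero_iff_linearIndependent.mpr hLI) (sub_dotProduct_cross_eq_zero hF hT)
  refine ⟨x, h₁, h₂, mem_line_of_torque_eq_zero hF₃ ?_⟩
  simpa [torque_eq_zero_of_mem_line h₁, torque_eq_zero_of_mem_line h₂] using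
    torque_add_torque_add_torque hF hT x

lemma liesInPlane_of_linearIndependent (hF₃ : F₃ ≠ 0) (hF : F₁ + F₂ + F₃ = 0)
    (hT : P₁ ⨯₃ F₁ + P₂ ⨯₃ F₂ + P₃ ⨯₃ F₃ = 0) (hLI : LinearIndependent K ![F₁, F₂]) :
    LiesInPlane (line P₁ F₁ ∪ line P₂ F₂ ∪ line P₃ F₃) := by
  obtain ⟨x, h₁, h₂, h₃⟩ := exists_mem_lines_of_linearIndependent hF₃ hF hT hLI
  have hN₁ : F₁ ⨯₃ F₂ ⬝ᵥ F₁ = 0 := by rw [dotProduct_comm, dot_self_cross]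
  have hN₂ : F₁ ⨯₃ F₂ ⬝ᵥ F₂ = 0 := by rw [dotProduct_comm, dot_cross_self]
  have hN₃ : F₁ ⨯₃ F₂ ⬝ᵥ F₃ = 0 := by
    rw [eq_neg_of_add_eq_zero_right hF, dotProduct_neg, dotProduct_add, hN₁, hN₂, add_zero,
      neg_zero]
  exact liesInPlane_union_line (crossProduct_ne_zero_iff_linearIndependent.mpr hLI) hN₁ hN₂ hN₃
    (dotProduct_eq_of_mem_line hN₁ h₁).symm (dotProduct_eq_of_mem_line hN₂ h₂).symm
    (dotProduct_eq_of_mem_line hN₃ h₃).symm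

end LinearOrderedField

end Balancing

open Balancing

theorem stmt19_general (F₁ F₂ F₃ P₁ P₂ P₃ : Fin 3 → ℝ)
    (hF₂ : F₂ ≠ 0) (hF₃ : F₃ ≠ 0)
    (hbalF : F₁ + F₂ + F₃ = 0)
    (hbalT : P₁ ⨯₃ F₁ + P₂ ⨯₃ F₂ + P₃ ⨯₃ F₃ = 0)
    (L₁ L₂ L₃ : Set (Fin 3 → ℝ))
    (hL₁ : L₁ = {x | ∃ t : ℝ, x = P₁ + t • F₁})
    (hL₂ : L₂ = {x | ∃ t : ℝ, x = P₂ + t • F₂})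
    (hL₃ : L₃ = {x | ∃ t : ℝ, x = P₃ + t • F₃}) :
    (∃ (n : Fin 3 → ℝ) (d : ℝ), n ≠ 0 ∧ ∀ x ∈ L₁ ∪ L₂ ∪ L₃, n ⬝ᵥ x = d) ∧
    (LinearIndependent ℝ ![F₁, F₂] → ∃ x, x ∈ L₁ ∧ x ∈ L₂ ∧ x ∈ L₃) ∧
    (¬ LinearIndependent ℝ ![F₁, F₂] →
      ¬ LinearIndependent ℝ ![F₁, F₂] ∧ ¬ LinearIndependent ℝ ![F₁, F₃] ∧
        ¬ LinearIndependent ℝ ![F₂, F₃]) := by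
  subst hL₁ hL₂ hL₃
  by_cases hLI : LinearIndependent ℝ ![F₁, F₂]
  · exact ⟨liesInPlane_of_linearIndependent hF₃ hbalF hbalT hLI,
      fun _ => exists_mem_lines_of_linearIndependent hF₃ hbalF hbalT hLI, fun h => (h hLI).elim⟩
  · exact ⟨liesInPlane_of_not_linearIndependent hF₂ hbalF hbalT hLI, fun h => (hLI h).elim,
      fun _ => ⟨hLI, not_linearIndependent_of_balanced hbalF hLI⟩⟩

/-- Proposition (troisminimale): if `F₁ + F₂ + F₃ = 0` (balancing of fluxes) and
`P₁ × F₁ + P₂ × F₂ + P₃ × F₃ = 0` (balancing of torques), then the axes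
`Lⱼ = Pⱼ + ℝ Fⱼ` lie in a common affine plane, and are concurrent when `F₁, F₂`
are linearly independent, while all the `Fⱼ` are pairwise dependent (the lines
are parallel) otherwise. -/
theorem stmt19 (F₁ F₂ F₃ P₁ P₂ P₃ : Fin 3 → ℝ)
    (hF₁ : F₁ ≠ 0) (hF₂ : F₂ ≠ 0) (hF₃ : F₃ ≠ 0)
    (hbalF : F₁ + F₂ + F₃ = 0)
    (hbalT : P₁ ⨯₃ F₁ + P₂ ⨯₃ F₂ + P₃ ⨯₃ F₃ = 0)
    (L₁ L₂ L₃ : Set (Fin 3 → ℝ))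
    (hL₁ : L₁ = {x | ∃ t : ℝ, x = P₁ + t • F₁})
    (hL₂ : L₂ = {x | ∃ t : ℝ, x = P₂ + t • F₂})
    (hL₃ : L₃ = {x | ∃ t : ℝ, x = P₃ + t • F₃}) :
    (∃ (n : Fin 3 → ℝ) (d : ℝ), n ≠ 0 ∧ ∀ x ∈ L₁ ∪ L₂ ∪ L₃, n ⬝ᵥ x = d) ∧
    (LinearIndependent ℝ ![F₁, F₂] → ∃ x, x ∈ L₁ ∧ x ∈ L₂ ∧ x ∈ L₃) ∧
    (¬ LinearIndependent ℝ ![F₁, F₂] →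
      ¬ LinearIndependent ℝ ![F₁, F₂] ∧ ¬ LinearIndependent ℝ ![F₁, F₃] ∧
        ¬ LinearIndependent ℝ ![F₂, F₃]) :=
  stmt19_general F₁ F₂ F₃ P₁ P₂ P₃ hF₂ hF₃ hbalF hbalT L₁ L₂ L₃ hL₁ hL₂ hL₃
end
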